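/- arXiv:1108.3008 — 7 statements merged into one kernel-verified Lean document; each statement's English description precedes it below -/
import Mathlib

section
/- For every q > 0 the equation ψ(z) = q has a unique solution ζ₀ in (0, ∞); this solution is a simple root, i.e. the derivative of ψ along the reals satisfies ψ'(ζ₀) > 0; and moreover every z ∈ ℂ with Re z ≥ 0 and ψ(z) = q satisfies Re z ≥ ζ₀. -/
/-!
On `[0, ∞)` the exponent is real, `f t = ψ t`, convex, and `f 0 = 0`; since `Λ` charges
`(k / 2, ∞)`, `f` eventually dominates a quadratic with positive leading coefficient, so it
crosses every level `q > 0`. Convexity together with `f 0 = 0` makes `f t / t` nondecreasing: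
this gives uniqueness of the crossing `ζ₀`, the bound `f' ζ₀ ≥ q / ζ₀ > 0`, and, combined
with `Re ψ z ≤ f (Re z)` (from `|exp (z x)| = exp (x Re z)` and `Re (z ^ 2) ≤ (Re z) ^ 2`),
that `ψ z = q` forces `Re z ≥ ζ₀`.
-/

open MeasureTheory Complex Set

theorem Real.abs_exp_sub_one_le_abs_mul_exp (y : ℝ) :
    |Real.exp y - 1| ≤ |y| * Real.exp |y| := by
  have h := Complex.norm_exp_sub_sum_le_norm_mul_exp (y : ℂ) 1
  simp only [Finset.range_one, Finset.sum_singleton, pow_zero, Nat.factorial_zero, Nat.cast_one,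
    div_one, pow_one, Complex.norm_real, Real.norm_eq_abs] at h
  rwa [← Complex.ofReal_exp, ← Complex.ofReal_one, ← Complex.ofReal_sub, Complex.norm_real,
    Real.norm_eq_abs] at h

theorem exists_lt_quadratic {a : ℝ} (ha : 0 < a) (b c q : ℝ) :
    ∃ t, 0 < t ∧ q < a * t ^ 2 + b * t + c := by
  set t := max 1 ((|b| + |c| + |q| + 1) / a)
  have ht1 : 1 ≤ t := le_max_left _ _
  have hta : |b| + |c| + |q| + 1 ≤ a * t := by
    rw [mul_comm, ← div_le_iff₀ ha]; exact le_max_right _ _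
  refine ⟨t, one_pos.trans_le ht1, ?_⟩
  have h1 := mul_le_mul_of_nonneg_right hta (zero_le_one.trans ht1)
  nlinarith [neg_abs_le b, neg_abs_le c, le_abs_self q, abs_nonneg b, abs_nonneg c, abs_nonneg q,
    mul_nonneg (add_nonneg (add_nonneg (abs_nonneg c) (abs_nonneg q)) zero_le_one)
      (sub_nonneg.2 ht1)]

theorem convexOn_integral {α E : Type*} [MeasurableSpace α] {μ : Measure α} [AddCommGroup E]
    [Module ℝ E] {s : Set E} (hs : Convex ℝ s) {F : E → α → ℝ}
    (hF : ∀ x, ConvexOn ℝ s (F · x)) (hint : ∀ t ∈ s, Integrable (F t) μ) :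
    ConvexOn ℝ s (fun t => ∫ x, F t x ∂μ) := by
  refine ⟨hs, fun t ht u hu a b ha hb hab => ?_⟩
  calc ∫ x, F (a • t + b • u) x ∂μ ≤ ∫ x, (a • F t x + b • F u x) ∂μ :=
        integral_mono (hint _ (hs ht hu ha hb hab))
          (((hint t ht).const_mul a).add ((hint u hu).const_mul b))
          fun x => (hF x).2 ht hu ha hb hab
    _ = a • ∫ x, F t x ∂μ + b • ∫ x, F u x ∂μ := by
        rw [integral_add (f := fun x => a • F t x) (g := fun x => b • F u x)
          ((hint t ht).smul a) ((hint u hu).smul b), integral_smul, integral_smul]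

namespace ConvexOn

variable {f : ℝ → ℝ} (hf : ConvexOn ℝ (Ici 0) f) (h0 : f 0 = 0)
include hf h0

theorem le_div_mul_of_map_zero {u v : ℝ} (hu : 0 ≤ u) (huv : u ≤ v) (hv : 0 < v) :
    f u ≤ u / v * f v := by
  have h := hf.2 (mem_Ici.2 le_rfl) (mem_Ici.2 hv.le) (sub_nonneg.2 ((div_le_one hv).2 huv))
    (div_nonneg hu hv.le) (sub_add_cancel 1 (u / v))
  simpa only [smul_eq_mul, mul_zero, zero_add, h0, div_mul_cancel₀ u hv.ne'] using h

theorem le_of_map_le_of_map_zero {u v : ℝ} (hu : 0 ≤ u) (hfv : 0 < f v) (h : f v ≤ f u) :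
    v ≤ u := by
  by_contra! huv
  have hv : 0 < v := hu.trans_lt huv
  have : f u < f v := calc
    f u ≤ u / v * f v := hf.le_div_mul_of_map_zero h0 hu huv.le hv
    _ < 1 * f v := by gcongr; exact (div_lt_one hv).2 huv
    _ = f v := one_mul _
  linarith

theorem exists_map_eq_of_map_zero {b q : ℝ} (hb : 0 < b) (hq : 0 < q) (hqb : q < f b) :
    ∃ ζ, 0 < ζ ∧ f ζ = q := by
  have hfb : 0 < f b := hq.trans hqb
  set a := q / (2 * f b) * b
  have ha : 0 < a := by positivity
  have hab : a ≤ b :=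
    mul_le_of_le_one_left hb.le ((div_le_one (by positivity)).2 (by linarith))
  have hfa : f a < q := calc
    f a ≤ a / b * f b := hf.le_div_mul_of_map_zero h0 ha.le hab hb
    _ = q / 2 := by dsimp only [a]; field_simp
    _ < q := half_lt_self hq
  have hcont : ContinuousOn f (Icc a b) :=
    hf.continuousOn_interior.mono fun t ht => by
      rw [interior_Ici]; exact ha.trans_le ht.1
  obtain ⟨ζ, hζ, hfζ⟩ := intermediate_value_Icc hab hcont ⟨hfa.le, hqb.le⟩
  exact ⟨ζ, ha.trans_le hζ.1, hfζ⟩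

theorem div_le_deriv_of_map_zero {ζ : ℝ} (hζ : 0 < ζ) (hd : DifferentiableAt ℝ f ζ) :
    f ζ / ζ ≤ deriv f ζ := by
  have h := hf.slope_le_deriv (mem_Ici.2 le_rfl) (mem_Ici.2 hζ.le) hζ hd
  rwa [slope_def_field, h0, sub_zero, sub_zero] at h

end ConvexOn

noncomputable def levyKernel (z : ℂ) (x : ℝ) : ℂ :=
  Complex.exp (z * x) - 1 - if |x| ≤ 1 then z * x else 0

noncomputable def levyKernelReal (t x : ℝ) : ℝ :=
  Real.exp (t * x) - 1 - if |x| ≤ 1 then t * x else 0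

noncomputable def levyKernelRealDeriv (t x : ℝ) : ℝ :=
  x * Real.exp (t * x) - if |x| ≤ 1 then x else 0

theorem levyKernel_ofReal (t x : ℝ) : levyKernel t x = levyKernelReal t x := by
  unfold levyKernel levyKernelReal
  split_ifs <;> push_cast <;> rfl

theorem re_levyKernel_le (z : ℂ) (x : ℝ) : (levyKernel z x).re ≤ levyKernelReal z.re x := by
  have h : (Complex.exp (z * x)).re ≤ Real.exp (z.re * x) := by
    simpa [Complex.norm_exp] using Complex.re_le_norm (Complex.exp (z * x))
  unfold levyKernel levyKernelReal
  split_ifs <;> simpa using h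

theorem measurable_levyKernel (z : ℂ) : Measurable (levyKernel z) :=
  ((by fun_prop : Measurable fun x : ℝ => Complex.exp (z * x) - 1)).sub <|
    Measurable.ite (measurableSet_le (by fun_prop) measurable_const) (by fun_prop) measurable_const

theorem measurable_levyKernelRealDeriv (t : ℝ) : Measurable (levyKernelRealDeriv t) :=
  ((by fun_prop : Measurable fun x : ℝ => x * Real.exp (t * x))).sub <|
    Measurable.ite (measurableSet_le (by fun_prop) measurable_const) measurable_id measurable_const

theorem levyKernelReal_zero_left (x : ℝ) : levyKernelReal 0 x = 0 := by
  simp [levyKernelReal]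

theorem convexOn_levyKernelReal (x : ℝ) : ConvexOn ℝ univ (levyKernelReal · x) := by
  refine ⟨convex_univ, fun t _ u _ a b ha hb hab => ?_⟩
  have h := convexOn_exp.2 (mem_univ (t * x)) (mem_univ (u * x)) ha hb hab
  simp only [smul_eq_mul] at h ⊢
  unfold levyKernelReal
  have hlin : (a * t + b * u) * x = a * (t * x) + b * (u * x) := by ring
  rw [hlin]
  split_ifs <;> nlinarith

theorem hasDerivAt_levyKernelReal (t x : ℝ) :
    HasDerivAt (levyKernelReal · x) (levyKernelRealDeriv t x) t := by
  have hexp : HasDerivAt (fun t => Real.exp (t * x)) (x * Real.exp (t * x)) t := by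
    simpa [mul_comm] using ((hasDerivAt_id t).mul_const x).exp
  unfold levyKernelReal levyKernelRealDeriv
  split_ifs
  · exact (hexp.sub_const 1).sub (hasDerivAt_mul_const x)
  · simpa using hexp.sub_const 1

theorem levyKernelReal_ge {t c : ℝ} (ht : 0 ≤ t) (x : ℝ) :
    -min 1 (x ^ 2) + (Ioi c).indicator (fun _ => Real.exp (t * c) - 1 - t) x ≤
      levyKernelReal t x := by
  have hsq : 0 ≤ min 1 (x ^ 2) := le_min zero_le_one (sq_nonneg x)
  unfold levyKernelReal
  by_cases hxc : x ∈ Ioi c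
  · have hexp : Real.exp (t * c) ≤ Real.exp (t * x) :=
      Real.exp_le_exp.2 (mul_le_mul_of_nonneg_left (le_of_lt hxc) ht)
    rw [indicator_of_mem hxc]
    split_ifs with hx
    · nlinarith [le_abs_self x]
    · linarith
  · rw [indicator_of_notMem hxc, add_zero]
    split_ifs with hx
    · linarith [Real.add_one_le_exp (t * x)]
    · have hmin : min 1 (x ^ 2) = 1 := min_eq_left (by nlinarith [sq_abs x])
      linarith [Real.exp_pos (t * x)]

theorem norm_levyKernel_le {z : ℂ} (hz : 0 ≤ z.re) {k x : ℝ} (hx : x ≤ k) :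
    ‖levyKernel z x‖ ≤
      (‖z‖ ^ 2 * Real.exp ‖z‖ + Real.exp (z.re * k) + 1) * min 1 (x ^ 2) := by
  have hnorm : ‖z * x‖ = ‖z‖ * |x| := by rw [norm_mul, Complex.norm_real, Real.norm_eq_abs]
  unfold levyKernel
  split_ifs with hx1
  · have h := Complex.norm_exp_sub_sum_le_norm_mul_exp (z * x) 2
    norm_num [Finset.sum_range_succ] at h
    have hmin : min 1 (x ^ 2) = x ^ 2 := min_eq_right (by nlinarith [abs_nonneg x, sq_abs x])
    rw [hmin]
    calc ‖Complex.exp (z * x) - 1 - z * x‖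
          ≤ (‖z‖ * |x|) ^ 2 * Real.exp (‖z‖ * |x|) := by simpa [sub_sub] using h
      _ ≤ ‖z‖ ^ 2 * x ^ 2 * Real.exp ‖z‖ := by
          rw [mul_pow, sq_abs]; gcongr; exact mul_le_of_le_one_right (norm_nonneg z) hx1
      _ ≤ _ := by nlinarith [Real.exp_pos (z.re * k), sq_nonneg x, Real.exp_pos ‖z‖]
  · have hmin : min 1 (x ^ 2) = 1 := min_eq_left (by nlinarith [sq_abs x])
    rw [hmin, mul_one, sub_zero]
    calc ‖Complex.exp (z * x) - 1‖
          ≤ ‖Complex.exp (z * x)‖ + ‖(1 : ℂ)‖ := norm_sub_le _ _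
      _ = Real.exp (z.re * x) + 1 := by simp [Complex.norm_exp]
      _ ≤ _ := by
          have : Real.exp (z.re * x) ≤ Real.exp (z.re * k) :=
            Real.exp_le_exp.2 (mul_le_mul_of_nonneg_left hx hz)
          nlinarith [Real.exp_pos ‖z‖, sq_nonneg ‖z‖]

theorem abs_levyKernelRealDeriv_le {a t T k x : ℝ} (ha : 0 < a) (hat : a ≤ t) (htT : t ≤ T)
    (hk : 0 ≤ k) (hx : x ≤ k) :
    |levyKernelRealDeriv t x| ≤
      (T * Real.exp T + a⁻¹ + k * Real.exp (T * k)) * min 1 (x ^ 2) := by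
  have hT : 0 < T := ha.trans_le (hat.trans htT)
  have hpos : 0 ≤ T * Real.exp T := by positivity
  unfold levyKernelRealDeriv
  split_ifs with hx1
  · have hmin : min 1 (x ^ 2) = x ^ 2 := min_eq_right (by nlinarith [abs_nonneg x, sq_abs x])
    have htx : |t * x| ≤ T := by
      rw [abs_mul, abs_of_pos (ha.trans_le hat)]; nlinarith [abs_nonneg x]
    rw [hmin]
    calc |x * Real.exp (t * x) - x| = |x| * |Real.exp (t * x) - 1| := by
          rw [← abs_mul, mul_sub, mul_one]
      _ ≤ |x| * (|t * x| * Real.exp |t * x|) := by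
          gcongr; exact Real.abs_exp_sub_one_le_abs_mul_exp _
      _ ≤ |x| * (T * |x| * Real.exp T) := by
          gcongr
          · rw [abs_mul, abs_of_pos (ha.trans_le hat)]; gcongr
      _ = T * Real.exp T * x ^ 2 := by rw [← sq_abs x]; ring
      _ ≤ _ := by gcongr; linarith [inv_pos.2 ha, mul_nonneg hk (Real.exp_pos (T * k)).le]
  · have hmin : min 1 (x ^ 2) = 1 := min_eq_left (by nlinarith [sq_abs x])
    have hinv : 0 < a⁻¹ := inv_pos.2 ha
    have hkexp : 0 ≤ k * Real.exp (T * k) := by positivity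
    rw [hmin, mul_one, sub_zero, abs_mul, Real.abs_exp]
    -- `t` bounded away from `0` is what tames `x * exp (t * x)` as `x → -∞`.
    rcases lt_or_gt_of_ne (show x ≠ 0 by rintro rfl; simp at hx1) with hneg | hpos
    · have h : |x| * Real.exp (t * x) ≤ a⁻¹ := calc
        |x| * Real.exp (t * x) ≤ |x| * Real.exp (a * x) :=
          mul_le_mul_of_nonneg_left
            (Real.exp_le_exp.2 (mul_le_mul_of_nonpos_right hat hneg.le)) (abs_nonneg x)
        _ = a⁻¹ * ((-(a * x)) * Real.exp (-(-(a * x)))) := by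
          rw [abs_of_neg hneg, neg_neg]; field_simp
        _ ≤ a⁻¹ * 1 := by
          gcongr
          exact (Real.mul_exp_neg_le_exp_neg_one _).trans (by simp)
        _ = a⁻¹ := mul_one _
      linarith
    · have h : |x| * Real.exp (t * x) ≤ k * Real.exp (T * k) := by
        rw [abs_of_pos hpos]
        gcongr
      linarith

noncomputable def levyExponent (σ μ : ℝ) (Λ : Measure ℝ) (z : ℂ) : ℂ :=
  (σ : ℂ) ^ 2 * z ^ 2 / 2 + (μ : ℂ) * z + ∫ x, levyKernel z x ∂Λ

noncomputable def levyExponentReal (σ μ : ℝ) (Λ : Measure ℝ) (t : ℝ) : ℝ :=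
  σ ^ 2 * t ^ 2 / 2 + μ * t + ∫ x, levyKernelReal t x ∂Λ

section LevyMeasure

variable {σ μ : ℝ} {Λ : Measure ℝ}

theorem levyExponent_ofReal (t : ℝ) : levyExponent σ μ Λ t = levyExponentReal σ μ Λ t := by
  simp only [levyExponent, levyExponentReal, levyKernel_ofReal]
  rw [integral_complex_ofReal]
  push_cast
  ring

theorem levyExponentReal_zero : levyExponentReal σ μ Λ 0 = 0 := by
  simp [levyExponentReal, levyKernelReal_zero_left]

variable {k : ℝ} (hΛ : Integrable (fun x => min 1 (x ^ 2)) Λ) (hk : ∀ᵐ x ∂Λ, x ≤ k)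
include hΛ hk

theorem integrable_levyKernel {z : ℂ} (hz : 0 ≤ z.re) : Integrable (levyKernel z) Λ :=
  (hΛ.const_mul _).mono' (measurable_levyKernel z).aestronglyMeasurable
    (hk.mono fun _ hx => norm_levyKernel_le hz hx)

theorem integrable_levyKernelReal {t : ℝ} (ht : 0 ≤ t) : Integrable (levyKernelReal t) Λ := by
  simpa [levyKernel_ofReal] using (integrable_levyKernel hΛ hk (z := t) (by simpa using ht)).re

theorem re_levyExponent_le {z : ℂ} (hz : 0 ≤ z.re) :
    (levyExponent σ μ Λ z).re ≤ levyExponentReal σ μ Λ z.re := by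
  have hquad : ((σ : ℂ) ^ 2 * z ^ 2 / 2 + μ * z).re =
      σ ^ 2 * (z.re ^ 2 - z.im ^ 2) / 2 + μ * z.re := by
    simp [pow_two, Complex.mul_re]
  have hint : (∫ x, levyKernel z x ∂Λ).re ≤ ∫ x, levyKernelReal z.re x ∂Λ := by
    rw [← RCLike.re_to_complex, ← integral_re (integrable_levyKernel hΛ hk hz)]
    exact integral_mono (integrable_levyKernel hΛ hk hz).re (integrable_levyKernelReal hΛ hk hz)
      (re_levyKernel_le z)
  rw [levyExponent, Complex.add_re, hquad, levyExponentReal]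
  nlinarith [sq_nonneg σ, sq_nonneg z.im]

theorem convexOn_levyExponentReal : ConvexOn ℝ (Ici 0) (levyExponentReal σ μ Λ) := by
  have hquad : ConvexOn ℝ (Ici 0) fun t : ℝ => σ ^ 2 * t ^ 2 / 2 + μ * t := by
    refine ⟨convex_Ici 0, fun t _ u _ a b ha hb hab => ?_⟩
    obtain rfl : b = 1 - a := by linarith
    simp only [smul_eq_mul]
    nlinarith [mul_nonneg (mul_nonneg (sq_nonneg σ) (mul_nonneg ha hb)) (sq_nonneg (t - u))]
  exact hquad.add (convexOn_integral (convex_Ici 0)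
    (fun x => (convexOn_levyKernelReal x).subset (subset_univ _) (convex_Ici 0))
    fun t ht => integrable_levyKernelReal hΛ hk ht)

theorem differentiableAt_levyExponentReal (hk0 : 0 ≤ k) {t : ℝ} (ht : 0 < t) :
    DifferentiableAt ℝ (levyExponentReal σ μ Λ) t := by
  have hball : ∀ s ∈ Metric.ball t (t / 2), t / 2 ≤ s ∧ s ≤ 2 * t := fun s hs => by
    rw [Metric.mem_ball, Real.dist_eq, abs_lt] at hs
    constructor <;> linarith
  have hint := hasDerivAt_integral_of_dominated_loc_of_deriv_le (μ := Λ)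
    (F := levyKernelReal) (F' := levyKernelRealDeriv) (x₀ := t)
    (Metric.ball_mem_nhds t (half_pos ht))
    ((eventually_gt_nhds ht).mono fun s hs =>
      (integrable_levyKernelReal hΛ hk hs.le).aestronglyMeasurable)
    (integrable_levyKernelReal hΛ hk ht.le)
    (measurable_levyKernelRealDeriv t).aestronglyMeasurable
    (hk.mono fun x hx s hs =>
      abs_levyKernelRealDeriv_le (half_pos ht) (hball s hs).1 (hball s hs).2 hk0 hx)
    (hΛ.const_mul _) (ae_of_all _ fun x s _ => hasDerivAt_levyKernelReal s x)
  exact (by fun_prop : DifferentiableAt ℝ (fun t : ℝ => σ ^ 2 * t ^ 2 / 2 + μ * t) t).add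
    hint.2.differentiableAt

theorem exists_lt_levyExponentReal {c : ℝ} (hc : 0 < c) (hΛc : 0 < Λ (Ioi c)) (q : ℝ) :
    ∃ t, 0 < t ∧ q < levyExponentReal σ μ Λ t := by
  have hfin : Λ (Ioi c) < ⊤ := by
    refine (measure_mono fun x (hx : c < x) => ?_).trans_lt
      (hΛ.measure_norm_ge_lt_top (lt_min one_pos (pow_pos hc 2)))
    show min 1 (c ^ 2) ≤ ‖min 1 (x ^ 2)‖
    rw [Real.norm_of_nonneg (le_min zero_le_one (sq_nonneg x))]
    exact min_le_min le_rfl (pow_le_pow_left₀ hc.le hx.le 2)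
  set m := Λ.real (Ioi c)
  have hm : 0 < m := ENNReal.toReal_pos hΛc.ne' hfin.ne
  set M := ∫ x, min 1 (x ^ 2) ∂Λ
  have hlow (t : ℝ) (ht : 0 ≤ t) :
      m * (Real.exp (t * c) - 1 - t) - M ≤ ∫ x, levyKernelReal t x ∂Λ := by
    have hind : Integrable ((Ioi c).indicator fun _ => Real.exp (t * c) - 1 - t) Λ :=
      (integrable_indicator_iff measurableSet_Ioi).2 (integrableOn_const hfin.ne)
    have h : ∫ x, (-min 1 (x ^ 2) + (Ioi c).indicator (fun _ => Real.exp (t * c) - 1 - t) x) ∂Λ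
        ≤ ∫ x, levyKernelReal t x ∂Λ :=
      integral_mono_ae (hΛ.neg.add hind) (integrable_levyKernelReal hΛ hk ht)
        (ae_of_all _ (levyKernelReal_ge ht))
    rw [integral_add (f := fun x => -min 1 (x ^ 2)) hΛ.neg hind, integral_neg,
      integral_indicator_const _ measurableSet_Ioi, smul_eq_mul] at h
    linarith
  obtain ⟨t, ht, hqt⟩ := exists_lt_quadratic (a := m * c ^ 2 / 2) (by positivity)
    (μ + m * c - m) (-M) q
  refine ⟨t, ht, hqt.trans_le ?_⟩
  have hexp := Real.quadratic_le_exp_of_nonneg (mul_nonneg ht.le hc.le)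
  have := hlow t ht.le
  rw [levyExponentReal]
  nlinarith [sq_nonneg σ, sq_nonneg t, mul_le_mul_of_nonneg_left hexp hm.le]

end LevyMeasure

theorem stmt_0_general (σ μ : ℝ) (Λ : Measure ℝ)
    (hΛint : ∫⁻ x : ℝ, ENNReal.ofReal (min 1 (x ^ 2)) ∂Λ < ⊤)
    (k : ℝ) (hk : 0 < k)
    (hsupp : Λ (Set.Ioi k) = 0)
    (hsupp' : ∀ x : ℝ, 0 < x → x < k → 0 < Λ (Set.Ioi x))
    (ψ : ℂ → ℂ)
    (hψ : ∀ z : ℂ, ψ z = (σ : ℂ) ^ 2 * z ^ 2 / 2 + (μ : ℂ) * z +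
      ∫ x : ℝ, (Complex.exp (z * (x : ℂ)) - 1 - (if |x| ≤ 1 then z * (x : ℂ) else 0)) ∂Λ)
    (q : ℝ) (hq : 0 < q) :
    ∃ ζ₀ : ℝ, 0 < ζ₀ ∧ ψ (ζ₀ : ℂ) = (q : ℂ) ∧
      (∀ x : ℝ, 0 < x → ψ (x : ℂ) = (q : ℂ) → x = ζ₀) ∧
      0 < deriv (fun x : ℝ => (ψ (x : ℂ)).re) ζ₀ ∧
      (∀ z : ℂ, 0 ≤ z.re → ψ z = (q : ℂ) → ζ₀ ≤ z.re) := by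
  obtain rfl : ψ = levyExponent σ μ Λ := funext hψ
  have hΛ : Integrable (fun x => min 1 (x ^ 2)) Λ :=
    ⟨by fun_prop, (hasFiniteIntegral_iff_ofReal
      (ae_of_all _ fun x => le_min zero_le_one (sq_nonneg x))).2 hΛint⟩
  have hΛk : ∀ᵐ x ∂Λ, x ≤ k := ae_iff.2 (by simp only [not_le]; exact hsupp)
  set f := levyExponentReal σ μ Λ
  have hf : ConvexOn ℝ (Ici 0) f := convexOn_levyExponentReal hΛ hΛk
  have hf0 : f 0 = 0 := levyExponentReal_zero
  have hfψ (x : ℝ) : levyExponent σ μ Λ x = q ↔ f x = q := by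
    rw [levyExponent_ofReal, Complex.ofReal_inj]
  obtain ⟨b, hb, hqb⟩ := exists_lt_levyExponentReal hΛ hΛk (half_pos hk)
    (hsupp' _ (half_pos hk) (half_lt_self hk)) q
  obtain ⟨ζ, hζ, hfζ⟩ := hf.exists_map_eq_of_map_zero hf0 hb hq hqb
  have hζq : 0 < f ζ := hfζ ▸ hq
  refine ⟨ζ, hζ, (hfψ ζ).2 hfζ, fun x hx hψx => ?_, ?_, fun z hz hψz => ?_⟩
  · have hfx := (hfψ x).1 hψx
    exact le_antisymm (hf.le_of_map_le_of_map_zero hf0 hζ.le (hfx ▸ hq) (by rw [hfx, hfζ]))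
      (hf.le_of_map_le_of_map_zero hf0 hx.le hζq (by rw [hfx, hfζ]))
  · have hre : (fun x : ℝ => (levyExponent σ μ Λ x).re) = f :=
      funext fun x => by rw [levyExponent_ofReal, Complex.ofReal_re]
    rw [hre]
    exact (div_pos hq hζ).trans_le (hfζ ▸ hf.div_le_deriv_of_map_zero hf0 hζ
      (differentiableAt_levyExponentReal hΛ hΛk hk.le hζ))
  · have hle := re_levyExponent_le hΛ hΛk (σ := σ) (μ := μ) hz
    rw [hψz, Complex.ofReal_re, ← hfζ] at hle
    exact hf.le_of_map_le_of_map_zero hf0 hz hζq hle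

/-- For the Laplace exponent `ψ` of a Lévy process with bounded positive
jumps (Lévy measure supported on `(-∞, k]` with right endpoint `k > 0`), for every `q > 0`
the equation `ψ(z) = q` has a unique positive real solution `ζ₀`; this root is simple
(the derivative of `ψ` along the reals at `ζ₀` is positive); and every solution `z` with
`Re z ≥ 0` satisfies `Re z ≥ ζ₀`. -/
theorem stmt_0 (σ μ : ℝ) (hσ : 0 ≤ σ) (Λ : Measure ℝ)
    (hΛ0 : Λ {0} = 0)
    (hΛint : ∫⁻ x : ℝ, ENNReal.ofReal (min 1 (x ^ 2)) ∂Λ < ⊤)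
    (k : ℝ) (hk : 0 < k)
    (hsupp : Λ (Set.Ioi k) = 0)
    (hsupp' : ∀ x : ℝ, 0 < x → x < k → 0 < Λ (Set.Ioi x))
    (ψ : ℂ → ℂ)
    (hψ : ∀ z : ℂ, ψ z = (σ : ℂ) ^ 2 * z ^ 2 / 2 + (μ : ℂ) * z +
      ∫ x : ℝ, (Complex.exp (z * (x : ℂ)) - 1 - (if |x| ≤ 1 then z * (x : ℂ) else 0)) ∂Λ)
    (q : ℝ) (hq : 0 < q) :
    ∃ ζ₀ : ℝ, 0 < ζ₀ ∧ ψ (ζ₀ : ℂ) = (q : ℂ) ∧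
      (∀ x : ℝ, 0 < x → ψ (x : ℂ) = (q : ℂ) → x = ζ₀) ∧
      0 < deriv (fun x : ℝ => (ψ (x : ℂ)).re) ζ₀ ∧
      (∀ z : ℂ, 0 ≤ z.re → ψ z = (q : ℂ) → ζ₀ ≤ z.re) :=
  stmt_0_general σ μ Λ hΛint k hk hsupp hsupp' ψ hψ q hq
end

section
/- For every ε > 0 there exists R > 0 such that every z ∈ Q₁ with ψ(z) = q and |z| > R satisfies |Re z − (1/k)(ln|B/A| + (a+b) ln|z|)| < ε. (The real parts of large solutions of ψ(z) = q grow like (1/k) ln|B/A| + ((a+b)/k) ln|z|.) -/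
/-!
On a solution of `ψ(z) = q` the two main terms `A e^{kz} z^{-a}` and `B z^b` must nearly cancel,
because their sum differs from the constant `q` by `o(|e^{kz}| |z|^{-a} + |z|^b)` and
`|q| = o(|z|^b)`. Hence their moduli have ratio close to `1`, and taking logarithms,
`k Re z - a ln|z| + ln|A| - b ln|z| - ln|B|` is close to `0`.
-/

open Complex

lemma abs_norm_sub_norm_le_norm_add_norm_sub_sub {G : Type*} [SeminormedAddCommGroup G]
    (u v w : G) : |‖u‖ - ‖v‖| ≤ ‖w‖ + ‖w - u - v‖ := by
  calc |‖u‖ - ‖v‖| = |‖u‖ - ‖-v‖| := by rw [norm_neg]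
    _ ≤ ‖u - -v‖ := abs_norm_sub_norm_le u (-v)
    _ = ‖w - (w - u - v)‖ := by congr 1; abel
    _ ≤ ‖w‖ + ‖w - u - v‖ := norm_sub_le _ _

/-- The constant `(e^δ - 1)/(e^δ + 1)` is chosen so that the hypothesis unfolds to exactly
`E ≤ e^δ P` and `P ≤ e^δ E`. -/
lemma abs_log_sub_log_le_of_abs_sub_le {E P δ : ℝ} (hE : 0 < E) (hP : 0 < P)
    (h : |E - P| ≤ (Real.exp δ - 1) / (Real.exp δ + 1) * (E + P)) :
    |Real.log E - Real.log P| ≤ δ := by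
  have hD : 0 < Real.exp δ + 1 := by positivity
  rw [div_mul_eq_mul_div, le_div_iff₀ hD] at h
  have hEP : E ≤ Real.exp δ * P := by nlinarith [le_abs_self (E - P)]
  have hPE : P ≤ Real.exp δ * E := by nlinarith [neg_abs_le (E - P)]
  have hlogE := Real.log_le_log hE hEP
  have hlogP := Real.log_le_log hP hPE
  rw [Real.log_mul (Real.exp_pos δ).ne' hP.ne', Real.log_exp] at hlogE
  rw [Real.log_mul (Real.exp_pos δ).ne' hE.ne', Real.log_exp] at hlogP
  exact abs_sub_le_iff.mpr ⟨by linarith, by linarith⟩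

lemma exists_pos_forall_le_mul_rpow {b c : ℝ} (hb : 0 < b) (hc : 0 < c) (C : ℝ) :
    ∃ R > 0, ∀ r : ℝ, R < r → C ≤ c * r ^ b := by
  obtain ⟨N, hN⟩ := Filter.eventually_atTop.mp
    (((tendsto_rpow_atTop hb).const_mul_atTop hc).eventually_ge_atTop C)
  exact ⟨max N 1, by positivity, fun r hr => hN r (le_of_max_le_left hr.le)⟩

section MainTerms

variable {k a b : ℝ} {A B z : ℂ}

lemma norm_mul_exp_mul_cpow_neg (hz : z ≠ 0) :
    ‖A * exp (k * z) * z ^ (-(a : ℂ))‖ = ‖A‖ * (‖exp (k * z)‖ * ‖z‖ ^ (-a)) := by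
  rw [norm_mul, norm_mul, norm_cpow_of_ne_zero hz]
  simp [mul_assoc]

lemma norm_mul_cpow (hz : z ≠ 0) : ‖B * z ^ (b : ℂ)‖ = ‖B‖ * ‖z‖ ^ b := by
  rw [norm_mul, norm_cpow_of_ne_zero hz]
  simp

lemma log_norm_sub_log_norm_eq (hk : k ≠ 0) (hA : A ≠ 0) (hB : B ≠ 0) (hz : z ≠ 0) :
    Real.log ‖A * exp (k * z) * z ^ (-(a : ℂ))‖ - Real.log ‖B * z ^ (b : ℂ)‖ =
      k * (z.re - 1 / k * (Real.log ‖B / A‖ + (a + b) * Real.log ‖z‖)) := by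
  have hA' : 0 < ‖A‖ := norm_pos_iff.mpr hA
  have hB' : 0 < ‖B‖ := norm_pos_iff.mpr hB
  have hz' : 0 < ‖z‖ := norm_pos_iff.mpr hz
  rw [norm_mul_exp_mul_cpow_neg hz, norm_mul_cpow hz, norm_exp, re_ofReal_mul,
    Real.log_mul hA'.ne' (by positivity), Real.log_mul (by positivity) (by positivity),
    Real.log_mul hB'.ne' (by positivity), Real.log_exp, Real.log_rpow hz', Real.log_rpow hz',
    norm_div, Real.log_div hB'.ne' hA'.ne']
  field_simp
  ring

lemma abs_norm_sub_norm_le_of_almost_cancel {η m : ℝ} {w : ℂ} (hz : z ≠ 0) (hη : 0 ≤ η)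
    (hmA : m ≤ ‖A‖) (hmB : m ≤ ‖B‖) (hw : ‖w‖ ≤ η / 2 * ‖B‖ * ‖z‖ ^ b)
    (herr : ‖w - A * exp (k * z) * z ^ (-(a : ℂ)) - B * z ^ (b : ℂ)‖ ≤
      η / 2 * m * (‖exp (k * z)‖ * ‖z‖ ^ (-a) + ‖z‖ ^ b)) :
    |‖A * exp (k * z) * z ^ (-(a : ℂ))‖ - ‖B * z ^ (b : ℂ)‖| ≤
      η * (‖A * exp (k * z) * z ^ (-(a : ℂ))‖ + ‖B * z ^ (b : ℂ)‖) := by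
  have hsplit := abs_norm_sub_norm_le_norm_add_norm_sub_sub
    (A * exp (k * z) * z ^ (-(a : ℂ))) (B * z ^ (b : ℂ)) w
  rw [norm_mul_exp_mul_cpow_neg hz, norm_mul_cpow hz] at hsplit ⊢
  set X := ‖exp (k * z)‖ * ‖z‖ ^ (-a)
  set Y := ‖z‖ ^ b
  have hX : 0 ≤ X := by positivity
  have hY : 0 ≤ Y := by positivity
  calc _ ≤ η / 2 * ‖B‖ * Y + η / 2 * m * (X + Y) := hsplit.trans (add_le_add hw herr)
    _ ≤ η / 2 * ‖B‖ * Y + η / 2 * (‖A‖ * X + ‖B‖ * Y) := by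
      rw [mul_assoc (η / 2) m, mul_add m]
      gcongr
    _ ≤ η * (‖A‖ * X + ‖B‖ * Y) := by
      nlinarith [mul_nonneg (norm_nonneg A) hX, mul_nonneg (norm_nonneg B) hY]

end MainTerms

theorem stmt_6_general (k a b : ℝ) (hk : 0 < k) (hb : 0 < b)
    (A B : ℂ) (hA : A ≠ 0) (hB : B ≠ 0) (q : ℝ)
    (ψ : ℂ → ℂ)
    (hψ : ∀ ε : ℝ, 0 < ε → ∃ R : ℝ, 0 < R ∧ ∀ z : ℂ, 0 < z.re → 0 < z.im → R < ‖z‖ →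
      ‖ψ z - A * Complex.exp (k * z) * z ^ (-(a : ℂ)) - B * z ^ ((b : ℂ))‖ ≤
        ε * (‖Complex.exp (k * z)‖ * ‖z‖ ^ (-a) + ‖z‖ ^ b)) :
    ∀ ε : ℝ, 0 < ε → ∃ R : ℝ, 0 < R ∧ ∀ z : ℂ, 0 < z.re → 0 < z.im →
      ψ z = (q : ℂ) → R < ‖z‖ →
      |z.re - (1 / k) * (Real.log ‖B / A‖ + (a + b) * Real.log ‖z‖)| < ε := by
  intro ε hε
  set η := (Real.exp (k * ε / 2) - 1) / (Real.exp (k * ε / 2) + 1)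
  have hη : 0 < η := div_pos (by simp [Real.one_lt_exp_iff]; positivity) (by positivity)
  have hA' : 0 < ‖A‖ := norm_pos_iff.mpr hA
  have hB' : 0 < ‖B‖ := norm_pos_iff.mpr hB
  obtain ⟨R₀, hR₀, hψR₀⟩ := hψ (η / 2 * min ‖A‖ ‖B‖) (by positivity)
  obtain ⟨R₁, hR₁, hqR₁⟩ := exists_pos_forall_le_mul_rpow hb
    (by positivity : 0 < η / 2 * ‖B‖) |q|
  refine ⟨max R₀ R₁, by positivity, fun z hre him hψz hzR => ?_⟩
  have hz : z ≠ 0 := norm_pos_iff.mp (by linarith [le_max_right R₀ R₁])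
  have hclose := abs_norm_sub_norm_le_of_almost_cancel hz hη.le (min_le_left ‖A‖ ‖B‖)
    (min_le_right ‖A‖ ‖B‖) (w := ψ z)
    (by rw [hψz, norm_real, Real.norm_eq_abs]
        exact hqR₁ ‖z‖ (lt_of_le_of_lt (le_max_right _ _) hzR))
    (hψR₀ z hre him (lt_of_le_of_lt (le_max_left _ _) hzR))
  have hlog := abs_log_sub_log_le_of_abs_sub_le (norm_pos_iff.mpr (by simp [hA, hz]))
    (norm_pos_iff.mpr (by simp [hB, hz])) hclose
  rw [log_norm_sub_log_norm_eq hk.ne' hA hB hz, abs_mul, abs_of_pos hk] at hlog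
  nlinarith

/-- Let `ψ` satisfy `ψ(z) = A e^{kz} z^{-a} + B z^{b} + o(e^{kz} z^{-a}) + o(z^{b})`
as `z → ∞` in the open first quadrant `Q₁`. Then for every `ε > 0` there exists `R > 0` such that
every `z ∈ Q₁` with `ψ(z) = q` and `|z| > R` satisfies
`|Re z - (1/k)(ln|B/A| + (a+b) ln|z|)| < ε`. -/
theorem stmt_6 (k a b : ℝ) (hk : 0 < k) (ha : 0 ≤ a) (hb : 0 < b)
    (A B : ℂ) (hA : A ≠ 0) (hB : B ≠ 0) (q : ℝ)
    (ψ : ℂ → ℂ)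
    (hψ : ∀ ε : ℝ, 0 < ε → ∃ R : ℝ, 0 < R ∧ ∀ z : ℂ, 0 < z.re → 0 < z.im → R < ‖z‖ →
      ‖ψ z - A * Complex.exp (k * z) * z ^ (-(a : ℂ)) - B * z ^ ((b : ℂ))‖ ≤
        ε * (‖Complex.exp (k * z)‖ * ‖z‖ ^ (-a) + ‖z‖ ^ b)) :
    ∀ ε : ℝ, 0 < ε → ∃ R : ℝ, 0 < R ∧ ∀ z : ℂ, 0 < z.re → 0 < z.im →
      ψ z = (q : ℂ) → R < ‖z‖ →
      |z.re - (1 / k) * (Real.log ‖B / A‖ + (a + b) * Real.log ‖z‖)| < ε :=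
  stmt_6_general k a b hk hb A B hA hB q ψ hψ
end

section
/- For every ε > 0 there exists R > 0 such that every z ∈ Q₁ with ψ(z) = q and |z| > R satisfies |arg z − π/2| < ε. (The arguments of large solutions of ψ(z) = q tend to π/2.) -/
/-!
If a solution `z ∈ Q₁` of `ψ z = q` had `arg z ≤ π/2 - ε`, then `Re z ≥ sin ε · |z|`, so the
exponential term has size at least `e^{k sin ε |z|} |z|^{-a}`. This grows faster than any power of
`|z|`, whereas `ψ z = q` forces it to be of size `O(1 + |z|^b)`.
-/

open Complex Asymptotics Filter

theorem isLittleO_rpow_exp_mul_rpow_neg {c : ℝ} (hc : 0 < c) (s a : ℝ) :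
    (fun t : ℝ => t ^ s) =o[atTop] fun t => Real.exp (c * t) * t ^ (-a) := by
  have h := (isLittleO_rpow_exp_pos_mul_atTop (s + a) hc).mul_isBigO
    (isBigO_refl (fun t : ℝ => t ^ (-a)) atTop)
  refine h.congr' ?_ EventuallyEq.rfl
  filter_upwards [eventually_gt_atTop 0] with t ht
  rw [← Real.rpow_add ht, add_neg_cancel_right]

theorem eventually_add_mul_rpow_lt_exp_mul_rpow_neg {c : ℝ} (hc : 0 < c) (a b K₀ K₁ : ℝ)
    {L : ℝ} (hL : 0 < L) :
    ∀ᶠ t in atTop, K₀ + K₁ * t ^ b < L * (Real.exp (c * t) * t ^ (-a)) := by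
  have hO : (fun t : ℝ => K₀ * t ^ (0 : ℝ) + K₁ * t ^ b) =o[atTop]
      fun t => Real.exp (c * t) * t ^ (-a) :=
    ((isLittleO_rpow_exp_mul_rpow_neg hc 0 a).const_mul_left K₀).add
      ((isLittleO_rpow_exp_mul_rpow_neg hc b a).const_mul_left K₁)
  filter_upwards [hO.bound (half_pos hL), eventually_gt_atTop 0] with t hbound ht
  have hpos : 0 < Real.exp (c * t) * t ^ (-a) := by positivity
  rw [Real.rpow_zero, mul_one, Real.norm_eq_abs, Real.norm_of_nonneg hpos.le] at hbound
  linarith [le_abs_self (K₀ + K₁ * t ^ b), mul_pos hL hpos]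

theorem Complex.sin_mul_norm_le_re {z : ℂ} {ε : ℝ} (him : 0 ≤ z.im) (hε : 0 ≤ ε)
    (harg : z.arg ≤ Real.pi / 2 - ε) : Real.sin ε * ‖z‖ ≤ z.re := by
  have hcos : Real.sin ε ≤ Real.cos z.arg := by
    rw [← Real.cos_pi_div_two_sub]
    exact Real.cos_le_cos_of_nonneg_of_le_pi (arg_nonneg_iff.mpr him)
      (by linarith [Real.pi_pos]) harg
  rw [← norm_mul_cos_arg, mul_comm]
  exact mul_le_mul_of_nonneg_left hcos (norm_nonneg z)

theorem norm_half_le_of_norm_sub_sub_le {E : Type*} [SeminormedAddCommGroup E] {w u v : E}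
    {r : ℝ} (h : ‖w - u - v‖ ≤ ‖u‖ / 2 + r) : ‖u‖ / 2 ≤ ‖w‖ + ‖v‖ + r := by
  have htri : ‖u‖ ≤ ‖w‖ + ‖v‖ + ‖w - u - v‖ :=
    calc ‖u‖ = ‖w - v - (w - u - v)‖ := by abel_nf
      _ ≤ ‖w - v‖ + ‖w - u - v‖ := norm_sub_le _ _
      _ ≤ ‖w‖ + ‖v‖ + ‖w - u - v‖ := by gcongr; exact norm_sub_le _ _
  linarith

theorem Complex.exp_mul_sin_mul_norm_le_norm_exp {k δ : ℝ} {z : ℂ} (hk : 0 ≤ k)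
    (him : 0 ≤ z.im) (hδ : 0 ≤ δ) (harg : z.arg ≤ Real.pi / 2 - δ) :
    Real.exp (k * Real.sin δ * ‖z‖) ≤ ‖exp (k * z)‖ := by
  rw [norm_exp, re_ofReal_mul, mul_assoc]
  exact Real.exp_le_exp.mpr (mul_le_mul_of_nonneg_left (sin_mul_norm_le_re him hδ harg) hk)

theorem norm_exp_term_le_of_norm_sub_le {k a b : ℝ} {A B w z : ℂ}
    (h : ‖w - A * exp (k * z) * z ^ (-(a : ℂ)) - B * z ^ (b : ℂ)‖ ≤
      ‖A‖ / 2 * (‖exp (k * z)‖ * ‖z‖ ^ (-a) + ‖z‖ ^ b)) :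
    ‖A‖ / 2 * (‖exp (k * z)‖ * ‖z‖ ^ (-a)) ≤ ‖w‖ + (‖B‖ + ‖A‖ / 2) * ‖z‖ ^ b := by
  have hu : ‖A * exp (k * z) * z ^ (-(a : ℂ))‖ = ‖A‖ * (‖exp (k * z)‖ * ‖z‖ ^ (-a)) := by
    rw [← ofReal_neg, norm_mul, norm_mul, norm_cpow_real, mul_assoc]
  have hsize := norm_half_le_of_norm_sub_sub_le (w := w) (v := B * z ^ (b : ℂ))
    (r := ‖A‖ / 2 * ‖z‖ ^ b) (by rw [hu]; linarith)
  rw [hu, norm_mul, norm_cpow_real] at hsize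
  linarith

theorem stmt_7_general (k a b : ℝ) (hk : 0 < k)
    (A B : ℂ) (hA : A ≠ 0) (q : ℝ)
    (ψ : ℂ → ℂ)
    (hψ : ∀ ε : ℝ, 0 < ε → ∃ R : ℝ, 0 < R ∧ ∀ z : ℂ, 0 < z.re → 0 < z.im → R < ‖z‖ →
      ‖ψ z - A * Complex.exp (k * z) * z ^ (-(a : ℂ)) - B * z ^ ((b : ℂ))‖ ≤
        ε * (‖Complex.exp (k * z)‖ * ‖z‖ ^ (-a) + ‖z‖ ^ b)) :
    ∀ ε : ℝ, 0 < ε → ∃ R : ℝ, 0 < R ∧ ∀ z : ℂ, 0 < z.re → 0 < z.im →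
      ψ z = (q : ℂ) → R < ‖z‖ → |z.arg - Real.pi / 2| < ε := by
  intro ε hε
  set δ := min ε 1
  have hδ : 0 < δ := lt_min hε one_pos
  have hsinδ : 0 < Real.sin δ :=
    Real.sin_pos_of_pos_of_lt_pi hδ ((min_le_right _ _).trans_lt (by linarith [Real.pi_gt_three]))
  obtain ⟨R₀, hR₀, hψ'⟩ := hψ (‖A‖ / 2) (by positivity)
  obtain ⟨R₁, hR₁⟩ := (eventually_add_mul_rpow_lt_exp_mul_rpow_neg (mul_pos hk hsinδ) a b
    ‖(q : ℂ)‖ (‖B‖ + ‖A‖ / 2) (half_pos (norm_pos_iff.mpr hA))).exists_forall_of_atTop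
  refine ⟨max R₀ R₁, lt_max_of_lt_left hR₀, fun z hre him hq hz => ?_⟩
  have hlt : z.arg < Real.pi / 2 := arg_lt_pi_div_two_iff.mpr (Or.inl hre)
  rw [abs_sub_lt_iff]
  refine ⟨by linarith, ?_⟩
  by_contra! harg
  have hexp := exp_mul_sin_mul_norm_le_norm_exp hk.le him.le hδ.le
    (by linarith [min_le_left ε 1])
  have hsize := norm_exp_term_le_of_norm_sub_le
    (hq ▸ hψ' z hre him ((le_max_left R₀ R₁).trans_lt hz))
  have hlarge := hR₁ ‖z‖ ((le_max_right R₀ R₁).trans hz.le)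
  have hdom : Real.exp (k * Real.sin δ * ‖z‖) * ‖z‖ ^ (-a) ≤ ‖exp (k * z)‖ * ‖z‖ ^ (-a) :=
    mul_le_mul_of_nonneg_right hexp (by positivity)
  nlinarith [norm_nonneg A]

/-- Let `ψ` satisfy `ψ(z) = A e^{kz} z^{-a} + B z^{b} + o(e^{kz} z^{-a}) + o(z^{b})`
as `z → ∞` in the open first quadrant `Q₁`. Then for every `ε > 0` there exists `R > 0` such that
every `z ∈ Q₁` with `ψ(z) = q` and `|z| > R` satisfies `|arg z - π/2| < ε`. -/
theorem stmt_7 (k a b : ℝ) (hk : 0 < k) (ha : 0 ≤ a) (hb : 0 < b)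
    (A B : ℂ) (hA : A ≠ 0) (hB : B ≠ 0) (q : ℝ)
    (ψ : ℂ → ℂ)
    (hψ : ∀ ε : ℝ, 0 < ε → ∃ R : ℝ, 0 < R ∧ ∀ z : ℂ, 0 < z.re → 0 < z.im → R < ‖z‖ →
      ‖ψ z - A * Complex.exp (k * z) * z ^ (-(a : ℂ)) - B * z ^ ((b : ℂ))‖ ≤
        ε * (‖Complex.exp (k * z)‖ * ‖z‖ ^ (-a) + ‖z‖ ^ b)) :
    ∀ ε : ℝ, 0 < ε → ∃ R : ℝ, 0 < R ∧ ∀ z : ℂ, 0 < z.re → 0 < z.im →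
      ψ z = (q : ℂ) → R < ‖z‖ → |z.arg - Real.pi / 2| < ε :=
  stmt_7_general k a b hk A B hA q ψ hψ
end

section
/- Assume that for some ε ∈ (0, 1) we have |g(z)| < ε |f(z)| for every z on the curve (so that f and f + g are nonzero on the curve). Then |Δarg(f + g, γ) − Δarg(f, γ)| < 4ε. -/
/-!
Write `w = (f + g) / f` along the curve. The difference of the two integrands is the logarithmic
derivative `w' / w`, and `‖w - 1‖ = ‖g / f‖ < ε < 1` keeps `w` in the right half-plane, where the
principal logarithm is a primitive of `w' / w`. Hence the difference of the changes of argument is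
`arg w(t₁) - arg w(t₀)`. Finally `|sin (arg w)| ≤ ‖w - 1‖`, so Jordan's inequality gives
`|arg w| ≤ (π / 2) ‖w - 1‖ < 2ε` at both endpoints.
-/

open Complex intervalIntegral

theorem Complex.abs_sin_arg_le_norm_sub_one (w : ℂ) : |Real.sin (arg w)| ≤ ‖w - 1‖ := by
  have hsq : ‖w - 1‖ ^ 2 = (‖w‖ - Real.cos (arg w)) ^ 2 + Real.sin (arg w) ^ 2 := by
    rw [← Complex.normSq_eq_norm_sq, Complex.normSq_apply, sub_re, sub_im, one_re, one_im,
      ← norm_mul_cos_arg, ← norm_mul_sin_arg]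
    linear_combination (‖w‖ ^ 2 - 1) * Real.sin_sq_add_cos_sq (arg w)
  exact abs_le_of_sq_le_sq (hsq ▸ le_add_of_nonneg_left (sq_nonneg _)) (norm_nonneg _)

theorem Complex.abs_arg_le_pi_div_two_mul_norm_sub_one {w : ℂ} (hw : 0 ≤ w.re) :
    |arg w| ≤ Real.pi / 2 * ‖w - 1‖ := by
  have := (Real.mul_abs_le_abs_sin (abs_arg_le_pi_div_two_iff.2 hw)).trans
    (abs_sin_arg_le_norm_sub_one w)
  rw [div_mul_eq_mul_div, div_le_iff₀ Real.pi_pos] at this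
  linarith

theorem Complex.re_pos_of_norm_sub_one_lt_one {w : ℂ} (hw : ‖w - 1‖ < 1) : 0 < w.re := by
  have := (abs_lt.1 ((abs_re_le_norm (w - 1)).trans_lt hw)).1
  rw [sub_re, one_re] at this
  linarith

theorem integral_eq_log_sub_log_of_hasDerivAt {w F : ℝ → ℂ} {a b : ℝ} (hab : a ≤ b)
    (hw : ContinuousOn w (Set.Icc a b)) (hslit : Set.MapsTo w (Set.Icc a b) slitPlane)
    (hderiv : ∀ t ∈ Set.Ioo a b, HasDerivAt w (F t * w t) t)
    (hF : IntervalIntegrable F MeasureTheory.volume a b) :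
    ∫ t in a..b, F t = log (w b) - log (w a) := by
  refine integral_eq_sub_of_hasDerivAt_of_le hab (hw.clog hslit) (fun t ht => ?_) hF
  have hwt := slitPlane_ne_zero (hslit (Set.Ioo_subset_Icc_self ht))
  simpa [mul_div_cancel_right₀ _ hwt] using
    (hderiv t ht).clog_real (hslit (Set.Ioo_subset_Icc_self ht))

theorem ContDiffOn.hasDerivAt_of_mem_Ioo {E : Type*} [NormedAddCommGroup E] [NormedSpace ℝ E]
    {γ : ℝ → E} {a b t : ℝ}
    (hγ : ContDiffOn ℝ 1 γ (Set.Icc a b)) (ht : t ∈ Set.Ioo a b) : HasDerivAt γ (deriv γ t) t :=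
  ((hγ.differentiableOn one_ne_zero).differentiableAt (Icc_mem_nhds ht.1 ht.2)).hasDerivAt

section CurveIntegrand

variable {γ : ℝ → ℂ} {a b : ℝ} {U : Set ℂ}

theorem ContDiffOn.intervalIntegrable_deriv_comp_mul_deriv_div {h : ℂ → ℂ} (hab : a < b)
    (hγ : ContDiffOn ℝ 1 γ (Set.Icc a b)) (hU : IsOpen U) (hγU : Set.MapsTo γ (Set.Icc a b) U)
    (hh : DifferentiableOn ℂ h U) (hne : ∀ t ∈ Set.Icc a b, h (γ t) ≠ 0) :
    IntervalIntegrable (fun t => deriv h (γ t) * deriv γ t / h (γ t)) MeasureTheory.volume a b := by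
  have hcont : ContinuousOn (fun t => deriv h (γ t) * derivWithin γ (Set.Icc a b) t / h (γ t))
      (Set.Icc a b) :=
    (((hh.analyticOnNhd hU).deriv.continuousOn.comp hγ.continuousOn hγU).mul
      (hγ.continuousOn_derivWithin (uniqueDiffOn_Icc hab) le_rfl)).div
      (hh.continuousOn.comp hγ.continuousOn hγU) hne
  refine (hcont.intervalIntegrable_of_Icc hab.le).congr_uIoo fun t ht => ?_
  rw [Set.uIoo_of_le hab.le] at ht
  simp only [derivWithin_of_mem_nhds (Icc_mem_nhds ht.1 ht.2)]

theorem integral_deriv_comp_div_sub_integral_deriv_comp_div {h₁ h₂ : ℂ → ℂ} (hab : a < b)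
    (hγ : ContDiffOn ℝ 1 γ (Set.Icc a b)) (hU : IsOpen U) (hγU : Set.MapsTo γ (Set.Icc a b) U)
    (hh₁ : DifferentiableOn ℂ h₁ U) (hh₂ : DifferentiableOn ℂ h₂ U)
    (hslit : Set.MapsTo (fun t => h₁ (γ t) / h₂ (γ t)) (Set.Icc a b) slitPlane) :
    (∫ t in a..b, deriv h₁ (γ t) * deriv γ t / h₁ (γ t)) -
        ∫ t in a..b, deriv h₂ (γ t) * deriv γ t / h₂ (γ t) =
      log (h₁ (γ b) / h₂ (γ b)) - log (h₁ (γ a) / h₂ (γ a)) := by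
  have hne : ∀ t ∈ Set.Icc a b, h₁ (γ t) ≠ 0 ∧ h₂ (γ t) ≠ 0 := fun t ht =>
    div_ne_zero_iff.1 (slitPlane_ne_zero (hslit ht))
  have hint₁ :=
    hγ.intervalIntegrable_deriv_comp_mul_deriv_div hab hU hγU hh₁ fun t ht => (hne t ht).1
  have hint₂ :=
    hγ.intervalIntegrable_deriv_comp_mul_deriv_div hab hU hγU hh₂ fun t ht => (hne t ht).2
  rw [← integral_sub hint₁ hint₂]
  refine integral_eq_log_sub_log_of_hasDerivAt hab.le ?_ hslit (fun t ht => ?_) (hint₁.sub hint₂)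
  · exact (hh₁.continuousOn.comp hγ.continuousOn hγU).div
      (hh₂.continuousOn.comp hγ.continuousOn hγU) fun t ht => (hne t ht).2
  · obtain ⟨hne₁, hne₂⟩ := hne t (Set.Ioo_subset_Icc_self ht)
    have hγt := hγ.hasDerivAt_of_mem_Ioo ht
    have hU_t := hU.mem_nhds (hγU (Set.Ioo_subset_Icc_self ht))
    have hd₁ := ((hh₁.differentiableAt hU_t).hasDerivAt).comp t hγt
    have hd₂ := ((hh₂.differentiableAt hU_t).hasDerivAt).comp t hγt
    refine (hd₁.div hd₂ hne₂).congr_deriv ?_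
    simp only [Function.comp_apply]
    field_simp

end CurveIntegrand

theorem stmt_9_general (t₀ t₁ : ℝ) (ht : t₀ < t₁) (γ : ℝ → ℂ)
    (hγ : ContDiffOn ℝ 1 γ (Set.Icc t₀ t₁))
    (U : Set ℂ) (hU : IsOpen U) (hUγ : γ '' Set.Icc t₀ t₁ ⊆ U)
    (f g : ℂ → ℂ) (hf : DifferentiableOn ℂ f U) (hg : DifferentiableOn ℂ g U)
    (ε : ℝ) (hε1 : ε < 1)
    (hfg : ∀ t ∈ Set.Icc t₀ t₁, ‖g (γ t)‖ < ε * ‖f (γ t)‖) :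
    |(∫ t in t₀..t₁, deriv (fun z => f z + g z) (γ t) * deriv γ t / (f (γ t) + g (γ t))).im -
      (∫ t in t₀..t₁, deriv f (γ t) * deriv γ t / f (γ t)).im| < 4 * ε := by
  set w : ℝ → ℂ := fun t => (f (γ t) + g (γ t)) / f (γ t)
  have hw : ∀ t ∈ Set.Icc t₀ t₁, ‖w t - 1‖ < ε := fun t ht => by
    have hf0 : f (γ t) ≠ 0 := fun h0 => by simpa [h0] using (norm_nonneg _).trans_lt (hfg t ht)
    show ‖(f (γ t) + g (γ t)) / f (γ t) - 1‖ < ε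
    rw [add_div, div_self hf0, add_sub_cancel_left, norm_div,
      div_lt_iff₀ (norm_pos_iff.2 hf0)]
    exact hfg t ht
  have hre : ∀ t ∈ Set.Icc t₀ t₁, 0 < (w t).re := fun t ht =>
    re_pos_of_norm_sub_one_lt_one ((hw t ht).trans hε1)
  have harg : ∀ t ∈ Set.Icc t₀ t₁, |arg (w t)| < 2 * ε := fun t ht => calc
    |arg (w t)| ≤ Real.pi / 2 * ‖w t - 1‖ := abs_arg_le_pi_div_two_mul_norm_sub_one (hre t ht).le
    _ < 2 * ε := by nlinarith [Real.pi_lt_four, norm_nonneg (w t - 1), hw t ht]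
  rw [← sub_im, integral_deriv_comp_div_sub_integral_deriv_comp_div (h₁ := fun z => f z + g z)
    ht hγ hU (Set.mapsTo_iff_image_subset.2 hUγ) (hf.add hg) hf fun t ht => .inl (hre t ht),
    sub_im, log_im, log_im]
  calc |arg (w t₁) - arg (w t₀)| ≤ |arg (w t₁)| + |arg (w t₀)| := abs_sub _ _
    _ < 2 * ε + 2 * ε :=
      add_lt_add (harg _ (Set.right_mem_Icc.2 ht.le)) (harg _ (Set.left_mem_Icc.2 ht.le))
    _ = 4 * ε := by ring

/-- Let `γ` be a continuously differentiable curve on `[t₀, t₁]` whose image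
lies in an open set `U`, and let `f, g` be holomorphic on `U`. If for some `ε ∈ (0,1)` we have
`|g| < ε |f|` along the curve, then the changes of argument
`Δarg(h, γ) = Im ∫_{t₀}^{t₁} h'(γ(t)) γ'(t) / h(γ(t)) dt` of `f + g` and of `f` along `γ`
differ by less than `4ε`. -/
theorem stmt_9 (t₀ t₁ : ℝ) (ht : t₀ < t₁) (γ : ℝ → ℂ)
    (hγ : ContDiffOn ℝ 1 γ (Set.Icc t₀ t₁))
    (U : Set ℂ) (hU : IsOpen U) (hUγ : γ '' Set.Icc t₀ t₁ ⊆ U)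
    (f g : ℂ → ℂ) (hf : DifferentiableOn ℂ f U) (hg : DifferentiableOn ℂ g U)
    (ε : ℝ) (hε0 : 0 < ε) (hε1 : ε < 1)
    (hfg : ∀ t ∈ Set.Icc t₀ t₁, ‖g (γ t)‖ < ε * ‖f (γ t)‖) :
    |(∫ t in t₀..t₁, deriv (fun z => f z + g z) (γ t) * deriv γ t / (f (γ t) + g (γ t))).im -
      (∫ t in t₀..t₁, deriv f (γ t) * deriv γ t / f (γ t)).im| < 4 * ε :=
  stmt_9_general t₀ t₁ ht γ hγ U hU hUγ f g hf hg ε hε1 hfg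
end

section
/- For every α ∈ (0, 1) and every z ∈ ℂ with Re z > 0, the integral ∫_{−∞}^0 (e^{zx} − 1) |x|^{−1−α} dx converges absolutely and α ∫_{−∞}^0 (e^{zx} − 1) |x|^{−1−α} dx = −Γ(1 − α) z^{α}. -/
/-!
Substituting `x = -t`, the integral becomes `∫₀^∞ (e^{-zt} - 1) t^{-1-α} dt`. Integrating by parts
against `(t^{-α})' = -α t^{-1-α}`, the boundary terms vanish because
`|e^{-zt} - 1| ≤ min (|z| t) 2`, so `α` times the integral equals `-z ∫₀^∞ t^{-α} e^{-zt} dt`.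
This Laplace transform is `Γ(1-α) z^{α-1}`: for real `z > 0` by rescaling the Gamma integral, and
on the whole half-plane `Re z > 0` by the identity theorem, both sides being holomorphic there.
-/

open MeasureTheory Complex Set Filter Topology

lemma norm_cexp_sub_one_le_norm {x : ℂ} (hx : x.re ≤ 0) : ‖exp x - 1‖ ≤ ‖x‖ := by
  have h := (convex_halfSpace_re_le (0 : ℝ)).norm_image_sub_le_of_norm_deriv_le
    (f := exp) (C := 1) (fun w _ => differentiableAt_exp)
    (fun w hw => by rw [Complex.deriv_exp, norm_exp, Real.exp_le_one_iff]; exact hw)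
    (show (0 : ℂ) ∈ {c : ℂ | c.re ≤ 0} by simp) hx
  simpa using h

lemma norm_cexp_sub_one_le_two {x : ℂ} (hx : x.re ≤ 0) : ‖exp x - 1‖ ≤ 2 := by
  calc ‖exp x - 1‖ ≤ ‖exp x‖ + ‖(1 : ℂ)‖ := norm_sub_le _ _
    _ ≤ 1 + 1 := by
      gcongr
      · rw [norm_exp, Real.exp_le_one_iff]; exact hx
      · simp
    _ = 2 := by norm_num

lemma norm_ofReal_cpow_mul_cexp_neg_mul {t : ℝ} (ht : 0 < t) (s w : ℂ) :
    ‖(t : ℂ) ^ s * exp (-(w * t))‖ = t ^ s.re * Real.exp (-(w.re * t)) := by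
  rw [norm_mul, norm_cpow_eq_rpow_re_of_pos ht, norm_exp]
  simp

lemma integrableOn_cpow_mul_cexp_neg_mul_Ioi {s w : ℂ} (hs : -1 < s.re) (hw : 0 < w.re) :
    IntegrableOn (fun t : ℝ => (t : ℂ) ^ s * exp (-(w * t))) (Ioi 0) := by
  have hbound : IntegrableOn (fun t : ℝ => t ^ s.re * Real.exp (-(w.re * t))) (Ioi 0) := by
    simpa using integrableOn_rpow_mul_exp_neg_mul_rpow hs zero_lt_one hw
  refine hbound.mono' (by fun_prop) ?_
  filter_upwards [ae_restrict_mem measurableSet_Ioi] with t ht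
  exact (norm_ofReal_cpow_mul_cexp_neg_mul ht s w).le

lemma hasDerivAt_ofReal_cpow_mul_cexp_neg_mul (t : ℝ) (s w : ℂ) :
    HasDerivAt (fun w : ℂ => (t : ℂ) ^ s * exp (-(w * t)))
      ((t : ℂ) ^ s * exp (-(w * t)) * -t) w := by
  have := ((hasDerivAt_mul_const (x := w) (t : ℂ)).neg.cexp).const_mul ((t : ℂ) ^ s)
  simpa [mul_assoc] using this

lemma differentiableAt_integral_cpow_mul_cexp_neg_mul {s w : ℂ} (hs : -1 < s.re) (hw : 0 < w.re) :
    DifferentiableAt ℂ (fun w : ℂ => ∫ t in Ioi (0 : ℝ), (t : ℂ) ^ s * exp (-(w * t))) w := by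
  set ε := w.re / 2
  have hε : 0 < ε := half_pos hw
  have hnhds : {w' : ℂ | ε < w'.re} ∈ 𝓝 w :=
    (isOpen_lt continuous_const continuous_re).mem_nhds (half_lt_self hw)
  have hbound : ∀ᵐ t : ℝ ∂(volume.restrict (Ioi 0)), ∀ w' ∈ {w' : ℂ | ε < w'.re},
      ‖(t : ℂ) ^ s * exp (-(w' * t)) * -(t : ℂ)‖ ≤ t ^ (s.re + 1) * Real.exp (-(ε * t)) := by
    filter_upwards [ae_restrict_mem measurableSet_Ioi] with t (ht : 0 < t) w' (hw' : ε < w'.re)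
    rw [norm_mul, norm_ofReal_cpow_mul_cexp_neg_mul ht, norm_neg, norm_real,
      Real.norm_of_nonneg ht.le, Real.rpow_add_one ht.ne']
    have : Real.exp (-(w'.re * t)) ≤ Real.exp (-(ε * t)) := by gcongr
    calc t ^ s.re * Real.exp (-(w'.re * t)) * t ≤ t ^ s.re * Real.exp (-(ε * t)) * t := by gcongr
      _ = t ^ s.re * t * Real.exp (-(ε * t)) := by ring
  have hbound_int : IntegrableOn (fun t : ℝ => t ^ (s.re + 1) * Real.exp (-(ε * t))) (Ioi 0) := by
    simpa using integrableOn_rpow_mul_exp_neg_mul_rpow (by linarith : -1 < s.re + 1) zero_lt_one hε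
  exact (hasDerivAt_integral_of_dominated_loc_of_deriv_le
    (F := fun w (t : ℝ) => (t : ℂ) ^ s * exp (-(w * t))) (μ := volume.restrict (Ioi 0)) hnhds
    (.of_forall fun _ => by fun_prop) (integrableOn_cpow_mul_cexp_neg_mul_Ioi hs hw)
    (by fun_prop) hbound hbound_int
    (.of_forall fun t w' _ => hasDerivAt_ofReal_cpow_mul_cexp_neg_mul t s w')).2.differentiableAt

lemma eqOn_re_pos_of_eq_ofReal {f g : ℂ → ℂ} (hf : AnalyticOnNhd ℂ f {w | 0 < w.re})
    (hg : AnalyticOnNhd ℂ g {w | 0 < w.re}) (hfg : ∀ r : ℝ, 0 < r → f r = g r) :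
    EqOn f g {w | 0 < w.re} := by
  have hreal : Tendsto (fun r : ℝ => (r : ℂ)) (𝓝[>] 1) (𝓝[≠] 1) :=
    tendsto_nhdsWithin_iff.2
      ⟨(continuous_ofReal.tendsto' 1 1 ofReal_one).mono_left nhdsWithin_le_nhds,
       eventually_nhdsWithin_of_forall fun r (hr : 1 < r) => by simpa using hr.ne'⟩
  refine hf.eqOn_of_preconnected_of_frequently_eq hg (convex_halfSpace_re_gt 0).isPreconnected
    (by simp) (hreal.frequently (Eventually.frequently ?_))
  exact eventually_nhdsWithin_of_forall fun r (hr : 1 < r) => hfg r (by linarith)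

lemma integral_cpow_mul_cexp_neg_mul_Ioi_of_re_pos {a w : ℂ} (ha : 0 < a.re) (hw : 0 < w.re) :
    ∫ t in Ioi (0 : ℝ), (t : ℂ) ^ (a - 1) * exp (-(w * t)) = Gamma a * w ^ (-a) := by
  have ha' : -1 < (a - 1).re := by simp [ha]
  refine eqOn_re_pos_of_eq_ofReal
    (f := fun w : ℂ => ∫ t in Ioi (0 : ℝ), (t : ℂ) ^ (a - 1) * exp (-(w * t)))
    (g := fun w => Gamma a * w ^ (-a)) ?_ ?_ (fun r hr => ?_) hw
  · exact DifferentiableOn.analyticOnNhd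
      (fun w hw => (differentiableAt_integral_cpow_mul_cexp_neg_mul ha' hw).differentiableWithinAt)
      (isOpen_lt continuous_const continuous_re)
  · exact DifferentiableOn.analyticOnNhd
      (fun w hw =>
        ((differentiableAt_id.cpow_const (Or.inl hw)).const_mul _).differentiableWithinAt)
      (isOpen_lt continuous_const continuous_re)
  · rw [integral_cpow_mul_exp_neg_mul_Ioi ha hr, mul_comm, one_div, cpow_neg,
      inv_cpow _ _ (by simp [arg_ofReal_of_nonneg hr.le, Real.pi_ne_zero.symm])]

section

variable {z : ℂ} (hz : 0 ≤ z.re) {t : ℝ} (ht : 0 < t) (p : ℝ)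
include hz ht

lemma norm_cexp_neg_mul_sub_one_mul_rpow_le_mul_rpow_add_one :
    ‖(exp (-(z * t)) - 1) * ((t ^ p : ℝ) : ℂ)‖ ≤ ‖z‖ * t ^ (p + 1) := by
  have hre : (-(z * t)).re ≤ 0 := by simpa using mul_nonneg hz ht.le
  rw [norm_mul, norm_real, Real.norm_of_nonneg (by positivity), Real.rpow_add_one ht.ne']
  calc ‖exp (-(z * t)) - 1‖ * t ^ p ≤ ‖z‖ * t * t ^ p := by
        gcongr
        simpa [Real.norm_of_nonneg ht.le] using norm_cexp_sub_one_le_norm hre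
    _ = ‖z‖ * (t ^ p * t) := by ring

lemma norm_cexp_neg_mul_sub_one_mul_rpow_le_two_mul_rpow :
    ‖(exp (-(z * t)) - 1) * ((t ^ p : ℝ) : ℂ)‖ ≤ 2 * t ^ p := by
  have hre : (-(z * t)).re ≤ 0 := by simpa using mul_nonneg hz ht.le
  rw [norm_mul, norm_real, Real.norm_of_nonneg (by positivity)]
  gcongr
  exact norm_cexp_sub_one_le_two hre

end

lemma tendsto_cexp_neg_mul_sub_one_mul_rpow_nhdsGT_zero {z : ℂ} (hz : 0 ≤ z.re) {p : ℝ}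
    (hp : -1 < p) :
    Tendsto (fun t : ℝ => (exp (-(z * t)) - 1) * ((t ^ p : ℝ) : ℂ)) (𝓝[>] 0) (𝓝 0) := by
  have hpow : Tendsto (fun t : ℝ => ‖z‖ * t ^ (p + 1)) (𝓝[>] 0) (𝓝 0) := by
    have := ((Real.continuousAt_rpow_const 0 (p + 1) (Or.inr (by linarith))).tendsto.const_mul
      ‖z‖).mono_left (nhdsWithin_le_nhds (s := Ioi 0))
    rwa [Real.zero_rpow (by linarith), mul_zero] at this
  refine squeeze_zero_norm' ?_ hpow
  filter_upwards [self_mem_nhdsWithin] with t (ht : 0 < t)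
  exact norm_cexp_neg_mul_sub_one_mul_rpow_le_mul_rpow_add_one hz ht p

lemma tendsto_cexp_neg_mul_sub_one_mul_rpow_atTop {z : ℂ} (hz : 0 ≤ z.re) {p : ℝ} (hp : p < 0) :
    Tendsto (fun t : ℝ => (exp (-(z * t)) - 1) * ((t ^ p : ℝ) : ℂ)) atTop (𝓝 0) := by
  refine squeeze_zero_norm' ?_
    (by simpa using (tendsto_rpow_neg_atTop (neg_pos.2 hp)).const_mul 2)
  filter_upwards [eventually_gt_atTop 0] with t ht
  exact norm_cexp_neg_mul_sub_one_mul_rpow_le_two_mul_rpow hz ht p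

lemma integrableOn_cexp_neg_mul_sub_one_mul_rpow_Ioi {α : ℝ} (hα0 : 0 < α) (hα1 : α < 1) {z : ℂ}
    (hz : 0 ≤ z.re) :
    IntegrableOn (fun t : ℝ => (exp (-(z * t)) - 1) * ((t ^ (-1 - α) : ℝ) : ℂ)) (Ioi 0) := by
  rw [← Ioc_union_Ioi_eq_Ioi zero_le_one]
  refine IntegrableOn.union ?_ ?_
  · have hbound : IntegrableOn (fun t : ℝ => ‖z‖ * t ^ (-1 - α + 1)) (Ioc 0 1) :=
      ((intervalIntegral.intervalIntegrable_rpow' (by linarith)).1).const_mul _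
    refine hbound.mono' (by fun_prop) ?_
    filter_upwards [ae_restrict_mem measurableSet_Ioc] with t ht
    exact norm_cexp_neg_mul_sub_one_mul_rpow_le_mul_rpow_add_one hz ht.1 _
  · have hbound : IntegrableOn (fun t : ℝ => 2 * t ^ (-1 - α)) (Ioi 1) :=
      (integrableOn_Ioi_rpow_of_lt (by linarith) one_pos).const_mul 2
    refine hbound.mono' (by fun_prop) ?_
    filter_upwards [ae_restrict_mem measurableSet_Ioi] with t (ht : 1 < t)
    exact norm_cexp_neg_mul_sub_one_mul_rpow_le_two_mul_rpow hz (one_pos.trans ht) _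

lemma integral_rpow_mul_cexp_neg_mul_Ioi_of_re_pos {β : ℝ} (hβ : 0 < β) {w : ℂ} (hw : 0 < w.re) :
    ∫ t in Ioi (0 : ℝ), ((t ^ (β - 1) : ℝ) : ℂ) * exp (-(w * t)) = Gamma β * w ^ (-(β : ℂ)) := by
  rw [← integral_cpow_mul_cexp_neg_mul_Ioi_of_re_pos (by simpa using hβ) hw]
  refine setIntegral_congr_fun measurableSet_Ioi fun t (ht : 0 < t) => ?_
  simp only [ofReal_cpow ht.le, ofReal_sub, ofReal_one]

lemma integral_cexp_neg_mul_sub_one_mul_rpow_Ioi {α : ℝ} (hα0 : 0 < α) (hα1 : α < 1) {z : ℂ}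
    (hz : 0 < z.re) :
    (α : ℂ) * ∫ t in Ioi (0 : ℝ), (exp (-(z * t)) - 1) * ((t ^ (-1 - α) : ℝ) : ℂ) =
      -(Real.Gamma (1 - α) : ℂ) * z ^ (α : ℂ) := by
  have hu : ∀ t ∈ Ioi (0 : ℝ), HasDerivAt (fun t : ℝ => exp (-(z * t)) - 1)
      (-z * exp (-(z * t))) t := fun t _ => by
    simpa [mul_comm] using (((hasDerivAt_id t).ofReal_comp.const_mul z).neg.cexp).sub_const 1
  have hv : ∀ t ∈ Ioi (0 : ℝ), HasDerivAt (fun t : ℝ => ((t ^ (-α) : ℝ) : ℂ))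
      (-α * ((t ^ (-1 - α) : ℝ) : ℂ)) t := fun t (ht : 0 < t) => by
    convert (Real.hasDerivAt_rpow_const (p := -α) (Or.inl ht.ne')).ofReal_comp using 1
    rw [show -α - 1 = -1 - α by ring]
    push_cast
    ring
  have hint := integrableOn_cexp_neg_mul_sub_one_mul_rpow_Ioi hα0 hα1 hz.le
  have hlaplace : IntegrableOn (fun t : ℝ => ((t ^ (-α) : ℝ) : ℂ) * exp (-(z * t))) (Ioi 0) := by
    refine (integrableOn_cpow_mul_cexp_neg_mul_Ioi (s := -α) (by simpa using hα1) hz).congr_fun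
      (fun t (ht : 0 < t) => ?_) measurableSet_Ioi
    simp [ofReal_cpow ht.le]
  have hparts := integral_Ioi_mul_deriv_eq_deriv_mul hu hv
    (by simpa [IntegrableOn, Pi.mul_def, mul_left_comm] using hint.const_mul (-α : ℂ))
    (by simpa [IntegrableOn, Pi.mul_def, mul_assoc, mul_comm] using hlaplace.const_mul (-z))
    (tendsto_cexp_neg_mul_sub_one_mul_rpow_nhdsGT_zero hz.le (by linarith))
    (tendsto_cexp_neg_mul_sub_one_mul_rpow_atTop hz.le (by linarith))
  have hlhs : ∫ t in Ioi (0 : ℝ), (exp (-(z * t)) - 1) * (-α * ((t ^ (-1 - α) : ℝ) : ℂ)) =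
      -α * ∫ t in Ioi (0 : ℝ), (exp (-(z * t)) - 1) * ((t ^ (-1 - α) : ℝ) : ℂ) := by
    rw [← integral_const_mul]
    simp only [mul_left_comm]
  have hrhs : ∫ t in Ioi (0 : ℝ), -z * exp (-(z * t)) * ((t ^ (-α) : ℝ) : ℂ) =
      -z * (Gamma (1 - α : ℝ) * z ^ (-((1 - α : ℝ) : ℂ))) := by
    rw [← integral_rpow_mul_cexp_neg_mul_Ioi_of_re_pos (by linarith) hz, ← integral_const_mul,
      sub_sub_cancel_left]
    simp only [mul_assoc, mul_comm (exp _)]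
  have hz0 : z ≠ 0 := fun h => by simp [h] at hz
  have hpow : z * z ^ (-((1 - α : ℝ) : ℂ)) = z ^ (α : ℂ) := by
    rw [show (α : ℂ) = 1 + -((1 - α : ℝ) : ℂ) by push_cast; ring, cpow_add _ _ hz0, cpow_one]
  rw [hlhs, hrhs] at hparts
  rw [← Gamma_ofReal, ← hpow]
  linear_combination -hparts

lemma integrableOn_comp_neg_Ioi_iff {E : Type*} [NormedAddCommGroup E] {f : ℝ → E} {c : ℝ} :
    IntegrableOn (fun x => f (-x)) (Ioi c) ↔ IntegrableOn f (Iio (-c)) := by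
  simpa [Function.comp_def] using
    (Measure.measurePreserving_neg (volume : Measure ℝ)).integrableOn_comp_preimage
      (Homeomorph.neg ℝ).measurableEmbedding (f := f) (s := Iio (-c))

/-- For every `α ∈ (0,1)` and every `z ∈ ℂ` with `Re z > 0`, the integral
`∫_{-∞}^0 (e^{zx} - 1) |x|^{-1-α} dx` converges absolutely and
`α ∫_{-∞}^0 (e^{zx} - 1) |x|^{-1-α} dx = -Γ(1-α) z^α` (principal complex power). -/
theorem stmt_12 (α : ℝ) (hα0 : 0 < α) (hα1 : α < 1) (z : ℂ) (hz : 0 < z.re) :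
    IntegrableOn (fun x : ℝ =>
      (Complex.exp (z * (x : ℂ)) - 1) * ((|x| ^ (-1 - α) : ℝ) : ℂ)) (Set.Iio 0) ∧
    (α : ℂ) * (∫ x in Set.Iio (0 : ℝ),
        (Complex.exp (z * (x : ℂ)) - 1) * ((|x| ^ (-1 - α) : ℝ) : ℂ)) =
      -((Real.Gamma (1 - α) : ℂ)) * z ^ ((α : ℂ)) := by
  set g := fun x : ℝ => (Complex.exp (z * (x : ℂ)) - 1) * ((|x| ^ (-1 - α) : ℝ) : ℂ)
  have hreflect : EqOn (fun t => g (-t))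
      (fun t : ℝ => (exp (-(z * t)) - 1) * ((t ^ (-1 - α) : ℝ) : ℂ)) (Ioi 0) :=
    fun t (ht : 0 < t) => by simp [g, abs_of_pos ht]
  have hint := integrableOn_cexp_neg_mul_sub_one_mul_rpow_Ioi hα0 hα1 hz.le
  refine ⟨?_, ?_⟩
  · simpa using integrableOn_comp_neg_Ioi_iff.1 (hint.congr_fun hreflect.symm measurableSet_Ioi)
  · rw [← integral_Iic_eq_integral_Iio, ← neg_zero, ← integral_comp_neg_Ioi,
      setIntegral_congr_fun measurableSet_Ioi hreflect]
    exact integral_cexp_neg_mul_sub_one_mul_rpow_Ioi hα0 hα1 hz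
end

section
/- Let k > 0 and let α < 1 with α ≠ 0. For every z ∈ ℂ the integral ∫_0^k (e^{zx} − 1) x^{−1−α} dx converges absolutely and α ∫_0^k (e^{zx} − 1) x^{−1−α} dx = Σ_{n=1}^∞ α k^{n−α} z^n / (n! (n − α)), where the series on the right converges absolutely for every z ∈ ℂ. -/
open MeasureTheory Complex

/-!
Expand `e^{zx} - 1 = ∑_{n ≥ 0} (zx)^{n+1} / (n+1)!`. Against `x^{-1-α}` the `n`-th term becomes
`z^{n+1} x^{n-α} / (n+1)!`, integrable on `(0, k]` because `n - α > -1`, with integral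
`z^{n+1} k^{n+1-α} / ((n+1)! (n+1-α))`. The integrals of the absolute values are dominated by
`k^{-α} / (1 - α)` times the exponential series of `k |z|`, so the series may be integrated term
by term; the same bound gives the absolute convergence of the integral and of the series.
-/

open Filter Set
open scoped Nat

theorem MeasureTheory.integrable_of_hasSum_of_summable_integral_norm {X E : Type*}
    [MeasurableSpace X] {μ : Measure X} [NormedAddCommGroup E] {F : ℕ → X → E} {f : X → E}
    (hF_int : ∀ n, Integrable (F n) μ) (hF_sum : Summable fun n ↦ ∫ x, ‖F n x‖ ∂μ)
    (hf : ∀ᵐ x ∂μ, HasSum (F · x) (f x)) : Integrable f μ := by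
  refine ⟨aestronglyMeasurable_of_tendsto_ae atTop
    (fun n ↦ Finset.aestronglyMeasurable_fun_sum _ fun i _ ↦ (hF_int i).1)
    (hf.mono fun x hx ↦ hx.tendsto_sum_nat), ?_⟩
  calc ∫⁻ x, ‖f x‖ₑ ∂μ ≤ ∫⁻ x, ∑' n, ‖F n x‖ₑ ∂μ :=
        lintegral_mono_ae <| hf.mono fun x hx ↦ hx.tsum_eq ▸ enorm_tsum_le_tsum_enorm
    _ = ∑' n, ∫⁻ x, ‖F n x‖ₑ ∂μ := lintegral_tsum fun n ↦ (hF_int n).1.enorm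
    _ = ENNReal.ofReal (∑' n, ∫ x, ‖F n x‖ ∂μ) := by
        rw [ENNReal.ofReal_tsum_of_nonneg (fun n ↦ integral_nonneg fun x ↦ norm_nonneg _) hF_sum]
        simp_rw [ofReal_integral_norm_eq_lintegral_enorm (hF_int _)]
    _ < ⊤ := ENNReal.ofReal_lt_top

theorem Complex.hasSum_exp_sub_one (w : ℂ) :
    HasSum (fun n : ℕ ↦ w ^ (n + 1) / (n + 1)!) (exp w - 1) := by
  rw [exp_eq_exp_ℂ]
  simpa using (hasSum_nat_add_iff' 1).2 (NormedSpace.expSeries_div_hasSum_exp w)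

theorem integrableOn_Ioc_rpow {k s : ℝ} (hk : 0 ≤ k) (hs : -1 < s) :
    IntegrableOn (fun x : ℝ ↦ x ^ s) (Ioc 0 k) := by
  rw [← intervalIntegrable_iff_integrableOn_Ioc_of_le hk]
  exact intervalIntegral.intervalIntegrable_rpow' hs

theorem setIntegral_Ioc_rpow {k s : ℝ} (hk : 0 ≤ k) (hs : -1 < s) :
    ∫ x in Ioc 0 k, x ^ s = k ^ (s + 1) / (s + 1) := by
  rw [← intervalIntegral.integral_of_le hk, integral_rpow (Or.inl hs),
    Real.zero_rpow (by linarith), sub_zero]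

theorem hasSum_exp_sub_one_mul_rpow (α : ℝ) (z : ℂ) {x : ℝ} (hx : 0 < x) :
    HasSum (fun n : ℕ ↦ z ^ (n + 1) / (n + 1)! * ((x ^ ((n : ℝ) - α) : ℝ) : ℂ))
      ((exp (z * x) - 1) * ((x ^ (-1 - α) : ℝ) : ℂ)) := by
  have hterm (n : ℕ) : (z * x) ^ (n + 1) / (n + 1)! * ((x ^ (-1 - α) : ℝ) : ℂ) =
      z ^ (n + 1) / (n + 1)! * ((x ^ ((n : ℝ) - α) : ℝ) : ℂ) := by
    have hpow : x ^ ((n : ℝ) - α) = x ^ (n + 1) * x ^ (-1 - α) := by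
      rw [← Real.rpow_natCast, ← Real.rpow_add hx]
      push_cast
      ring_nf
    rw [hpow, mul_pow]
    push_cast
    ring
  simpa only [hterm] using (hasSum_exp_sub_one (z * x)).mul_right ((x ^ (-1 - α) : ℝ) : ℂ)

section ExpSubOneMulRpow

variable {k α : ℝ}

theorem summable_pow_div_factorial_mul_rpow (hk : 0 < k) (hα : α < 1) {r : ℝ} (hr : 0 ≤ r) :
    Summable fun n : ℕ ↦ r ^ (n + 1) / (n + 1)! * (k ^ ((n : ℝ) + 1 - α) / ((n : ℝ) + 1 - α)) := by
  have hexp : Summable fun n : ℕ ↦ (k * r) ^ (n + 1) / (n + 1)! :=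
    (summable_nat_add_iff 1).2 (Real.summable_pow_div_factorial (k * r))
  refine (hexp.mul_left (k ^ (-α) / (1 - α))).of_nonneg_of_le (fun n ↦ ?_) (fun n ↦ ?_)
  · have : 0 < (n : ℝ) + 1 - α := by linarith [n.cast_nonneg (α := ℝ)]
    positivity
  · have hk_pow : k ^ ((n : ℝ) + 1 - α) = k ^ (-α) * k ^ (n + 1) := by
      rw [← Real.rpow_natCast, ← Real.rpow_add hk]
      push_cast
      ring_nf
    have h1α : 0 < 1 - α := by linarith
    have hle : 1 - α ≤ (n : ℝ) + 1 - α := by linarith [n.cast_nonneg (α := ℝ)]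
    rw [hk_pow, mul_pow]
    have : 0 ≤ r ^ (n + 1) / (n + 1)! * (k ^ (-α) * k ^ (n + 1)) := by positivity
    calc r ^ (n + 1) / (n + 1)! * (k ^ (-α) * k ^ (n + 1) / ((n : ℝ) + 1 - α))
        = (r ^ (n + 1) / (n + 1)! * (k ^ (-α) * k ^ (n + 1))) / ((n : ℝ) + 1 - α) := by ring
      _ ≤ (r ^ (n + 1) / (n + 1)! * (k ^ (-α) * k ^ (n + 1))) / (1 - α) :=
        div_le_div_of_nonneg_left this h1α hle
      _ = k ^ (-α) / (1 - α) * (k ^ (n + 1) * r ^ (n + 1) / (n + 1)!) := by ring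

theorem hasSum_setIntegral_exp_sub_one_mul_rpow (hk : 0 < k) (hα : α < 1) (z : ℂ) :
    IntegrableOn (fun x : ℝ ↦ (exp (z * x) - 1) * ((x ^ (-1 - α) : ℝ) : ℂ)) (Ioc 0 k) ∧
    HasSum (fun n : ℕ ↦ z ^ (n + 1) / (n + 1)! *
        ((k ^ ((n : ℝ) + 1 - α) / ((n : ℝ) + 1 - α) : ℝ) : ℂ))
      (∫ x in Ioc 0 k, (exp (z * x) - 1) * ((x ^ (-1 - α) : ℝ) : ℂ)) := by
  set F : ℕ → ℝ → ℂ := fun n x ↦ z ^ (n + 1) / (n + 1)! * ((x ^ ((n : ℝ) - α) : ℝ) : ℂ)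
  have hs (n : ℕ) : -1 < (n : ℝ) - α := by linarith [n.cast_nonneg (α := ℝ)]
  have hs' (n : ℕ) : (n : ℝ) - α + 1 = n + 1 - α := by ring
  have hF_int (n : ℕ) : IntegrableOn (F n) (Ioc 0 k) :=
    (integrableOn_Ioc_rpow hk.le (hs n)).ofReal.const_mul _
  have hF_integral (n : ℕ) : ∫ x in Ioc 0 k, F n x =
      z ^ (n + 1) / (n + 1)! * ((k ^ ((n : ℝ) + 1 - α) / ((n : ℝ) + 1 - α) : ℝ) : ℂ) := by
    rw [integral_const_mul, ← hs', ← setIntegral_Ioc_rpow hk.le (hs n)]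
    exact congrArg _ integral_ofReal
  have hF_norm (n : ℕ) : ∫ x in Ioc 0 k, ‖F n x‖ =
      ‖z‖ ^ (n + 1) / (n + 1)! * (k ^ ((n : ℝ) + 1 - α) / ((n : ℝ) + 1 - α)) := by
    rw [← hs', ← setIntegral_Ioc_rpow hk.le (hs n), ← integral_const_mul]
    refine setIntegral_congr_fun measurableSet_Ioc fun x hx ↦ ?_
    simp [F, abs_of_nonneg (Real.rpow_nonneg hx.1.le _)]
  have hF_sum : Summable fun n ↦ ∫ x in Ioc 0 k, ‖F n x‖ := by
    simpa only [hF_norm] using summable_pow_div_factorial_mul_rpow hk hα (norm_nonneg z)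
  have hF_hasSum : ∀ᵐ x ∂volume.restrict (Ioc 0 k),
      HasSum (F · x) ((exp (z * x) - 1) * ((x ^ (-1 - α) : ℝ) : ℂ)) :=
    (ae_restrict_iff' measurableSet_Ioc).2 <|
      .of_forall fun x hx ↦ hasSum_exp_sub_one_mul_rpow α z hx.1
  refine ⟨integrable_of_hasSum_of_summable_integral_norm hF_int hF_sum hF_hasSum, ?_⟩
  rw [← funext hF_integral, ← integral_congr_ae (hF_hasSum.mono fun x hx ↦ hx.tsum_eq)]
  exact hasSum_integral_of_summable_integral_norm hF_int hF_sum

end ExpSubOneMulRpow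

theorem stmt_13_general (k α : ℝ) (hk : 0 < k) (hα1 : α < 1) (z : ℂ) :
    IntegrableOn (fun x : ℝ =>
      (Complex.exp (z * (x : ℂ)) - 1) * ((x ^ (-1 - α) : ℝ) : ℂ)) (Set.Ioc 0 k) ∧
    Summable (fun n : ℕ =>
      ‖((α * k ^ (((n : ℝ) + 1) - α) / ((Nat.factorial (n + 1) : ℝ) * (((n : ℝ) + 1) - α)) : ℝ) : ℂ)
        * z ^ (n + 1)‖) ∧
    (α : ℂ) * (∫ x in Set.Ioc (0 : ℝ) k,
        (Complex.exp (z * (x : ℂ)) - 1) * ((x ^ (-1 - α) : ℝ) : ℂ)) =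
      ∑' n : ℕ,
        ((α * k ^ (((n : ℝ) + 1) - α) / ((Nat.factorial (n + 1) : ℝ) * (((n : ℝ) + 1) - α)) : ℝ) : ℂ)
          * z ^ (n + 1) := by
  obtain ⟨hint, hsum⟩ := hasSum_setIntegral_exp_sub_one_mul_rpow hk hα1 z
  have hcoeff (n : ℕ) :
      ((α * k ^ (((n : ℝ) + 1) - α) / ((n + 1)! * (((n : ℝ) + 1) - α)) : ℝ) : ℂ) * z ^ (n + 1) =
        α * (z ^ (n + 1) / (n + 1)! * ((k ^ ((n : ℝ) + 1 - α) / ((n : ℝ) + 1 - α) : ℝ) : ℂ)) := by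
    simp only [Complex.ofReal_div, Complex.ofReal_mul, Complex.ofReal_natCast]
    ring
  refine ⟨hint, ?_, ?_⟩
  · refine ((summable_pow_div_factorial_mul_rpow hk hα1 (norm_nonneg z)).mul_left |α|).congr
      fun n ↦ ?_
    have : 0 < (n : ℝ) + 1 - α := by linarith [n.cast_nonneg (α := ℝ)]
    rw [hcoeff, norm_mul, norm_mul, norm_div, norm_pow, Complex.norm_real, Complex.norm_real,
      Complex.norm_natCast, Real.norm_eq_abs, Real.norm_of_nonneg (by positivity)]
  · simp_rw [hcoeff]
    exact (hsum.mul_left (α : ℂ)).tsum_eq.symm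

/-- Let `k > 0` and `α < 1`, `α ≠ 0`. For every `z ∈ ℂ` the integral
`∫_0^k (e^{zx} - 1) x^{-1-α} dx` converges absolutely and
`α ∫_0^k (e^{zx} - 1) x^{-1-α} dx = Σ_{n≥1} α k^{n-α} z^n / (n! (n-α))`, the series
converging absolutely for every `z ∈ ℂ`. -/
theorem stmt_13 (k α : ℝ) (hk : 0 < k) (hα1 : α < 1) (hα0 : α ≠ 0) (z : ℂ) :
    IntegrableOn (fun x : ℝ =>
      (Complex.exp (z * (x : ℂ)) - 1) * ((x ^ (-1 - α) : ℝ) : ℂ)) (Set.Ioc 0 k) ∧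
    Summable (fun n : ℕ =>
      ‖((α * k ^ (((n : ℝ) + 1) - α) / ((Nat.factorial (n + 1) : ℝ) * (((n : ℝ) + 1) - α)) : ℝ) : ℂ)
        * z ^ (n + 1)‖) ∧
    (α : ℂ) * (∫ x in Set.Ioc (0 : ℝ) k,
        (Complex.exp (z * (x : ℂ)) - 1) * ((x ^ (-1 - α) : ℝ) : ℂ)) =
      ∑' n : ℕ,
        ((α * k ^ (((n : ℝ) + 1) - α) / ((Nat.factorial (n + 1) : ℝ) * (((n : ℝ) + 1) - α)) : ℝ) : ℂ)
          * z ^ (n + 1) :=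
  stmt_13_general k α hk hα1 z
end

section
/- Let k > 0 and let g : ℝ → ℂ be continuous on [0, k]. Then ∫_0^k g(x) e^{zx} dx = o(e^{kz}) as z → ∞ in the closed right half-plane; precisely, for every ε > 0 there exists R > 0 such that |∫_0^k g(x) e^{zx} dx| ≤ ε e^{k Re z} for every z ∈ ℂ with Re z ≥ 0 and |z| > R. -/
/-!
Since `Re z ≥ 0`, `‖exp (z x)‖ ≤ exp (k Re z)` on `[0, k]`. Approximate `g` uniformly within `δ`
by a `C¹` function `h` (Weierstrass); the error term is then at most `δ k exp (k Re z)`. For `h`,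
integration by parts gives `z ∫ h(x) e^{zx} dx = h(k) e^{kz} - h(0) - ∫ h'(x) e^{zx} dx`, whose
right-hand side is `O(exp (k Re z))`, so `∫ h(x) e^{zx} dx = O(exp (k Re z) / ‖z‖)`.
-/

open Complex intervalIntegral Set

section

variable {a b : ℝ} {z : ℂ}

theorem norm_cexp_mul_ofReal_le (hz : 0 ≤ z.re) {x : ℝ} (hx : x ≤ b) :
    ‖cexp (z * x)‖ ≤ Real.exp (b * z.re) := by
  rw [norm_exp, re_mul_ofReal, mul_comm]
  exact Real.exp_le_exp.mpr (mul_le_mul_of_nonneg_right hx hz)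

theorem norm_integral_mul_cexp_le (hab : a ≤ b) (hz : 0 ≤ z.re) {f : ℝ → ℂ} {C : ℝ}
    (hf : ∀ x ∈ Icc a b, ‖f x‖ ≤ C) :
    ‖∫ x in a..b, f x * cexp (z * x)‖ ≤ C * (b - a) * Real.exp (b * z.re) := by
  have hbound : ∀ x ∈ uIoc a b, ‖f x * cexp (z * x)‖ ≤ C * Real.exp (b * z.re) := by
    intro x hx
    rw [uIoc_of_le hab] at hx
    have hx' : x ∈ Icc a b := Ioc_subset_Icc_self hx
    rw [norm_mul]
    exact mul_le_mul (hf x hx') (norm_cexp_mul_ofReal_le hz hx.2) (norm_nonneg _)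
      ((norm_nonneg _).trans (hf x hx'))
  calc ‖∫ x in a..b, f x * cexp (z * x)‖ ≤ C * Real.exp (b * z.re) * |b - a| :=
        norm_integral_le_of_norm_le_const hbound
    _ = C * (b - a) * Real.exp (b * z.re) := by rw [abs_of_nonneg (sub_nonneg.mpr hab)]; ring

theorem integral_mul_cexp_mul_eq {h h' : ℝ → ℂ} (hh : ∀ x ∈ uIcc a b, HasDerivAt h (h' x) x)
    (hh' : IntervalIntegrable h' MeasureTheory.volume a b) :
    (∫ x in a..b, h x * cexp (z * x)) * z =
      h b * cexp (z * b) - h a * cexp (z * a) - ∫ x in a..b, h' x * cexp (z * x) := by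
  have hexp : Continuous fun x : ℝ => cexp (z * x) := by fun_prop
  have hcont : ContinuousOn h (uIcc a b) := fun x hx => (hh x hx).continuousAt.continuousWithinAt
  have hint : IntervalIntegrable (fun x => h x * cexp (z * x)) MeasureTheory.volume a b :=
    (hcont.mul hexp.continuousOn).intervalIntegrable
  have hint' : IntervalIntegrable (fun x => h' x * cexp (z * x)) MeasureTheory.volume a b :=
    hh'.mul_continuousOn hexp.continuousOn
  have hderiv : ∀ x ∈ uIcc a b, HasDerivAt (fun t : ℝ => h t * cexp (z * t))
      (h' x * cexp (z * x) + h x * cexp (z * x) * z) x := by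
    intro x hx
    have he : HasDerivAt (fun t : ℝ => cexp (z * t)) (cexp (z * x) * z) x := by
      simpa using ((hasDerivAt_id (x : ℂ)).const_mul z).cexp.comp_ofReal
    exact ((hh x hx).mul he).congr_deriv (by ring)
  have hftc := integral_eq_sub_of_hasDerivAt hderiv (hint'.add (hint.mul_const z))
  rw [integral_add hint' (hint.mul_const z), integral_mul_const] at hftc
  linear_combination hftc

theorem norm_integral_mul_cexp_mul_norm_le {h : ℝ → ℂ} (hh : ContDiff ℝ 1 h) (hab : a ≤ b)
    {M : ℝ} (hM : ∀ x ∈ Icc a b, ‖deriv h x‖ ≤ M) (hz : 0 ≤ z.re) :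
    ‖∫ x in a..b, h x * cexp (z * x)‖ * ‖z‖ ≤
      (‖h a‖ + ‖h b‖ + M * (b - a)) * Real.exp (b * z.re) := by
  have hder : ∀ x ∈ uIcc a b, HasDerivAt h (deriv h x) x := fun x _ =>
    (hh.differentiable one_ne_zero x).hasDerivAt
  have hibp := integral_mul_cexp_mul_eq (z := z) hder
    ((hh.continuous_deriv le_rfl).intervalIntegrable a b)
  have hend : ∀ x ≤ b, ‖h x * cexp (z * x)‖ ≤ ‖h x‖ * Real.exp (b * z.re) := fun x hx => by
    rw [norm_mul]
    exact mul_le_mul_of_nonneg_left (norm_cexp_mul_ofReal_le hz hx) (norm_nonneg _)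
  rw [← norm_mul, hibp]
  calc _ ≤ ‖h b * cexp (z * b)‖ + ‖h a * cexp (z * a)‖ +
        ‖∫ x in a..b, deriv h x * cexp (z * x)‖ := norm_sub_le_of_le (norm_sub_le _ _) le_rfl
    _ ≤ ‖h b‖ * Real.exp (b * z.re) + ‖h a‖ * Real.exp (b * z.re) +
        M * (b - a) * Real.exp (b * z.re) := by
      gcongr
      · exact hend b le_rfl
      · exact hend a hab
      · exact norm_integral_mul_cexp_le hab hz hM
    _ = (‖h a‖ + ‖h b‖ + M * (b - a)) * Real.exp (b * z.re) := by ring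

theorem exists_norm_integral_mul_cexp_le_of_contDiff {h : ℝ → ℂ} (hh : ContDiff ℝ 1 h)
    (hab : a ≤ b) {ε : ℝ} (hε : 0 < ε) :
    ∃ R > 0, ∀ z : ℂ, 0 ≤ z.re → R < ‖z‖ →
      ‖∫ x in a..b, h x * cexp (z * x)‖ ≤ ε * Real.exp (b * z.re) := by
  obtain ⟨M, hM⟩ := isCompact_Icc.exists_bound_of_continuousOn
    (hh.continuous_deriv le_rfl).continuousOn (s := Icc a b)
  have hM0 : 0 ≤ M := (norm_nonneg _).trans (hM a ⟨le_rfl, hab⟩)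
  set C := ‖h a‖ + ‖h b‖ + M * (b - a)
  have hC : 0 ≤ C := by have := sub_nonneg.mpr hab; positivity
  refine ⟨C / ε + 1, by positivity, fun z hz hzR => ?_⟩
  have hzpos : 0 < ‖z‖ := lt_trans (by positivity) hzR
  have hCz : C ≤ ε * ‖z‖ := by
    rw [div_add_one hε.ne', div_lt_iff₀ hε] at hzR
    linarith
  refine le_of_mul_le_mul_right ?_ hzpos
  calc _ ≤ C * Real.exp (b * z.re) := norm_integral_mul_cexp_mul_norm_le hh hab hM hz
    _ ≤ ε * ‖z‖ * Real.exp (b * z.re) := by gcongr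
    _ = ε * Real.exp (b * z.re) * ‖z‖ := by ring

theorem ContinuousOn.exists_contDiff_norm_sub_le {g : ℝ → ℂ} (hg : ContinuousOn g (Icc a b))
    {δ : ℝ} (hδ : 0 < δ) : ∃ h : ℝ → ℂ, ContDiff ℝ 1 h ∧ ∀ x ∈ Icc a b, ‖g x - h x‖ ≤ δ := by
  obtain ⟨p, hp⟩ := exists_polynomial_near_of_continuousOn a b (fun x => (g x).re)
    (continuous_re.comp_continuousOn hg) (δ / 2) (half_pos hδ)
  obtain ⟨q, hq⟩ := exists_polynomial_near_of_continuousOn a b (fun x => (g x).im)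
    (continuous_im.comp_continuousOn hg) (δ / 2) (half_pos hδ)
  have hpoly : ∀ r : Polynomial ℝ, ContDiff ℝ 1 fun x : ℝ => ((r.eval x : ℝ) : ℂ) := fun r =>
    ofRealCLM.contDiff.comp (by simpa using r.contDiff_aeval (𝕜 := ℝ) 1)
  refine ⟨fun x => p.eval x + q.eval x * I, (hpoly p).add ((hpoly q).mul contDiff_const),
    fun x hx => ?_⟩
  calc ‖g x - (p.eval x + q.eval x * I)‖ ≤ |(g x).re - p.eval x| + |(g x).im - q.eval x| := by
        simpa using norm_le_abs_re_add_abs_im (g x - (p.eval x + q.eval x * I))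
    _ ≤ δ / 2 + δ / 2 := by
      rw [abs_sub_comm, abs_sub_comm (g x).im]
      exact add_le_add (hp x hx).le (hq x hx).le
    _ = δ := add_halves δ

end

/-- Let `k > 0` and let `g : ℝ → ℂ` be continuous on `[0, k]`. Then
`∫_0^k g(x) e^{zx} dx = o(e^{kz})` as `z → ∞` in the closed right half-plane: for every
`ε > 0` there exists `R > 0` such that `‖∫_0^k g(x) e^{zx} dx‖ ≤ ε e^{k Re z}` for every
`z` with `Re z ≥ 0` and `|z| > R`. -/
theorem stmt_14 (k : ℝ) (hk : 0 < k) (g : ℝ → ℂ) (hg : ContinuousOn g (Set.Icc 0 k)) :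
    ∀ ε : ℝ, 0 < ε → ∃ R : ℝ, 0 < R ∧ ∀ z : ℂ, 0 ≤ z.re → R < ‖z‖ →
      ‖∫ x in (0 : ℝ)..k, g x * Complex.exp (z * (x : ℂ))‖ ≤ ε * Real.exp (k * z.re) := by
  intro ε hε
  obtain ⟨h, hh, hgh⟩ := hg.exists_contDiff_norm_sub_le (δ := ε / (2 * k)) (by positivity)
  obtain ⟨R, hR, hRh⟩ := exists_norm_integral_mul_cexp_le_of_contDiff hh hk.le (half_pos hε)
  refine ⟨R, hR, fun z hz hzR => ?_⟩
  have hexp : Continuous fun x : ℝ => cexp (z * x) := by fun_prop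
  have hsplit : ∫ x in (0 : ℝ)..k, g x * cexp (z * x) =
      (∫ x in (0 : ℝ)..k, (g x - h x) * cexp (z * x)) + ∫ x in (0 : ℝ)..k, h x * cexp (z * x) := by
    rw [← integral_add]
    · simp only [sub_mul, sub_add_cancel]
    · exact ((hg.sub hh.continuous.continuousOn).mul hexp.continuousOn).intervalIntegrable_of_Icc
        hk.le
    · exact (hh.continuous.mul hexp).intervalIntegrable 0 k
  have happrox : ‖∫ x in (0 : ℝ)..k, (g x - h x) * cexp (z * x)‖ ≤ ε / 2 * Real.exp (k * z.re) :=
    (norm_integral_mul_cexp_le hk.le hz hgh).trans_eq (by field_simp; ring)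
  calc _ ≤ ε / 2 * Real.exp (k * z.re) + ε / 2 * Real.exp (k * z.re) := by
        rw [hsplit]; exact norm_add_le_of_le happrox (hRh z hz hzR)
    _ = ε * Real.exp (k * z.re) := by ring
end
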